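/- arXiv:2409.10155 — 10 statements merged into one kernel-verified Lean document; each statement's English description precedes it below -/
import Mathlib

section
/- Let 0 < ε < 1/100. In the two-stage stochastic makespan problem, let OPT denote the optimal expected makespan and let T be a real number with OPT ≤ T < (1+ε)·OPT. Then there exists a first-stage assignment of the jobs to the m bags in which every nonempty bag has total job size in the closed interval [ε·T, (1+ε)·T], and whose expected makespan cost is at most (1+3ε)·T. -/
noncomputable def machineLoad {n m k : ℕ} (p : Fin n → ℝ) (σ₁ : Fin n → Fin m)
    (σ₂ : Fin m → Fin k) (i : Fin k) : ℝ :=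
  ∑ j ∈ Finset.univ.filter (fun j => σ₂ (σ₁ j) = i), p j

noncomputable def makespan {n m k : ℕ} (p : Fin n → ℝ) (σ₁ : Fin n → Fin m)
    (σ₂ : Fin m → Fin k) : ℝ :=
  ⨆ i : Fin k, machineLoad p σ₁ σ₂ i

noncomputable def scenarioCost {n m : ℕ} (p : Fin n → ℝ) (σ₁ : Fin n → Fin m) (k : ℕ) : ℝ :=
  ⨅ σ₂ : Fin m → Fin k, makespan p σ₁ σ₂

noncomputable def expCost {n m : ℕ} (p : Fin n → ℝ) (q : Fin m → ℝ)
    (σ₁ : Fin n → Fin m) : ℝ :=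
  ∑ k : Fin m, q k * scenarioCost p σ₁ (k.val + 1)

noncomputable def OPTval (n m : ℕ) (p : Fin n → ℝ) (q : Fin m → ℝ) : ℝ :=
  ⨅ σ₁ : Fin n → Fin m, expCost p q σ₁

/-- Size of bag `b` under first-stage assignment `σ₁`. -/
noncomputable def bagSize {n m : ℕ} (p : Fin n → ℝ) (σ₁ : Fin n → Fin m) (b : Fin m) : ℝ :=
  ∑ j ∈ Finset.univ.filter (fun j => σ₁ j = b), p j

/-!
Start from an optimal first-stage assignment: in every scenario each of its bags lies on one
machine, so every bag has size at most `OPT ≤ T`. Greedily group the bags smaller than `εT` into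
groups smaller than `2εT`, all but at most one of size at least `εT`. In scenario `k`, keep the
other bags where an optimal schedule (of makespan `C`) puts them and place the groups one at a
time on a least loaded machine: the total size is at most `k C`, so that machine has load at most
`C`, and the makespan grows by at most `2εT`. Finally merge the leftover group, smaller than
`εT`, into another nonempty bag; this costs at most `εT` more in every scenario.
-/

open Finset

section Bags

variable {n m : ℕ} (p : Fin n → ℝ)

lemma bagSize_nonneg (hp : ∀ j, 0 ≤ p j) (σ : Fin n → Fin m) (b : Fin m) :
    0 ≤ bagSize p σ b :=
  sum_nonneg fun j _ => hp j

lemma bagSize_pos (hp : ∀ j, 0 < p j) {σ : Fin n → Fin m} {b : Fin m} (hb : ∃ j, σ j = b) :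
    0 < bagSize p σ b := by
  obtain ⟨j, rfl⟩ := hb
  exact sum_pos (fun i _ => hp i) ⟨j, by simp⟩

lemma sum_bagSize (σ : Fin n → Fin m) : ∑ b, bagSize p σ b = ∑ j, p j :=
  sum_fiberwise univ σ p

lemma machineLoad_eq_sum_bagSize {k : ℕ} (σ : Fin n → Fin m) (σ₂ : Fin m → Fin k) (i : Fin k) :
    machineLoad p σ σ₂ i = ∑ b with σ₂ b = i, bagSize p σ b := by
  rw [machineLoad, ← sum_fiberwise_of_maps_to (g := σ) (t := univ.filter (σ₂ · = i))
    (fun j hj => by simpa using hj)]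
  refine sum_congr rfl fun b hb => sum_congr ?_ fun _ _ => rfl
  ext j
  simp only [mem_filter, mem_univ, true_and] at hb ⊢
  constructor
  · exact And.right
  · rintro rfl; exact ⟨hb, rfl⟩

lemma bagSize_comp (σ : Fin n → Fin m) (f : Fin m → Fin m) (c : Fin m) :
    bagSize p (f ∘ σ) c = ∑ b with f b = c, bagSize p σ b :=
  machineLoad_eq_sum_bagSize p σ f c

lemma sum_machineLoad {k : ℕ} (σ : Fin n → Fin m) (σ₂ : Fin m → Fin k) :
    ∑ i, machineLoad p σ σ₂ i = ∑ j, p j :=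
  sum_fiberwise univ (σ₂ ∘ σ) p

lemma scenarioCost_le_of_forall_machineLoad_le {k : ℕ} {σ : Fin n → Fin m}
    (σ₂ : Fin m → Fin (k + 1)) {C : ℝ} (h : ∀ i, machineLoad p σ σ₂ i ≤ C) :
    scenarioCost p σ (k + 1) ≤ C :=
  (ciInf_le (Set.finite_range _).bddBelow σ₂).trans (ciSup_le h)

lemma exists_machineLoad_le_scenarioCost (σ : Fin n → Fin m) (k : ℕ) :
    ∃ σ₂ : Fin m → Fin (k + 1), ∀ i, machineLoad p σ σ₂ i ≤ scenarioCost p σ (k + 1) := by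
  obtain ⟨σ₂, hmin⟩ := Finite.exists_min (makespan p σ : (Fin m → Fin (k + 1)) → ℝ)
  exact ⟨σ₂, fun i => (le_ciSup (Set.finite_range _).bddAbove i).trans (le_ciInf hmin)⟩

lemma bagSize_le_scenarioCost (hp : ∀ j, 0 ≤ p j) (σ : Fin n → Fin m) (b : Fin m) (k : ℕ) :
    bagSize p σ b ≤ scenarioCost p σ (k + 1) := by
  obtain ⟨σ₂, hσ₂⟩ := exists_machineLoad_le_scenarioCost p σ k
  refine le_trans ?_ (hσ₂ (σ₂ b))
  rw [machineLoad_eq_sum_bagSize]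
  exact single_le_sum (fun c _ => bagSize_nonneg p hp σ c) (by simp)

lemma scenarioCost_le_sum (hp : ∀ j, 0 ≤ p j) (σ : Fin n → Fin m) (k : ℕ) :
    scenarioCost p σ (k + 1) ≤ ∑ j, p j :=
  scenarioCost_le_of_forall_machineLoad_le p (fun _ => 0) fun _ =>
    sum_le_sum_of_subset_of_nonneg (filter_subset _ _) fun j _ _ => hp j

end Bags

section ExpectedCost

variable {n m : ℕ} {p : Fin n → ℝ} {q : Fin m → ℝ}

lemma le_expCost (hq : ∀ k, 0 ≤ q k) (hq1 : ∑ k, q k = 1) {σ : Fin n → Fin m} {x : ℝ}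
    (h : ∀ k : ℕ, x ≤ scenarioCost p σ (k + 1)) : x ≤ expCost p q σ :=
  calc x = ∑ k, q k * x := by rw [← sum_mul, hq1, one_mul]
    _ ≤ expCost p q σ := sum_le_sum fun k _ => mul_le_mul_of_nonneg_left (h k) (hq k)

lemma expCost_le (hq : ∀ k, 0 ≤ q k) (hq1 : ∑ k, q k = 1) {σ : Fin n → Fin m} {x : ℝ}
    (h : ∀ k : ℕ, scenarioCost p σ (k + 1) ≤ x) : expCost p q σ ≤ x :=
  calc expCost p q σ ≤ ∑ k, q k * x := sum_le_sum fun k _ => mul_le_mul_of_nonneg_left (h k) (hq k)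
    _ = x := by rw [← sum_mul, hq1, one_mul]

lemma expCost_le_expCost_add (hq : ∀ k, 0 ≤ q k) (hq1 : ∑ k, q k = 1) {σ σ' : Fin n → Fin m}
    {d : ℝ} (h : ∀ k : ℕ, scenarioCost p σ' (k + 1) ≤ scenarioCost p σ (k + 1) + d) :
    expCost p q σ' ≤ expCost p q σ + d :=
  calc expCost p q σ' ≤ ∑ k : Fin m, q k * (scenarioCost p σ (k + 1) + d) :=
        sum_le_sum fun k _ => mul_le_mul_of_nonneg_left (h k) (hq k)
    _ = expCost p q σ + d := by
        simp only [mul_add, sum_add_distrib, ← sum_mul, hq1, one_mul, expCost]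

lemma exists_expCost_eq_OPTval [Nonempty (Fin m)] (p : Fin n → ℝ) (q : Fin m → ℝ) :
    ∃ σ : Fin n → Fin m, expCost p q σ = OPTval n m p q := by
  obtain ⟨σ, hmin⟩ := Finite.exists_min (expCost p q : (Fin n → Fin m) → ℝ)
  exact ⟨σ, le_antisymm (le_ciInf hmin) (ciInf_le (Set.finite_range _).bddBelow σ)⟩

end ExpectedCost

theorem exists_schedule_le_add {ι κ : Type*} [Fintype ι] [DecidableEq ι] [Fintype κ]
    [DecidableEq κ] [Nonempty κ] {s : ι → ℝ} {C D : ℝ} (hsum : ∑ i, s i ≤ Fintype.card κ * C)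
    (I : Finset ι) (hs : ∀ i ∈ I, 0 ≤ s i) (hD : ∀ i ∈ I, s i ≤ D) (ψ : ι → κ)
    (hψ : ∀ x, ∑ i ∈ Iᶜ with ψ i = x, s i ≤ C + D) :
    ∃ ψ' : ι → κ, ∀ x, ∑ i with ψ' i = x, s i ≤ C + D := by
  induction I using Finset.induction_on generalizing ψ with
  | empty => exact ⟨ψ, by simpa using hψ⟩
  | insert b I hb ih =>
    set load : κ → ℝ := fun x => ∑ i ∈ (insert b I)ᶜ with ψ i = x, s i
    obtain ⟨x₀, hx₀⟩ := Finite.exists_min load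
    have hx₀C : load x₀ ≤ C := by
      refine le_of_mul_le_mul_left ?_ (Nat.cast_pos.2 (Fintype.card_pos (α := κ)))
      calc Fintype.card κ * load x₀ ≤ ∑ x, load x := by
            simpa using card_nsmul_le_sum univ load _ fun x _ => hx₀ x
        _ = ∑ i ∈ (insert b I)ᶜ, s i := sum_fiberwise _ _ _
        _ ≤ ∑ i, s i := by
            rw [← sum_compl_add_sum (insert b I)]
            exact le_add_of_nonneg_right (sum_nonneg hs)
        _ ≤ Fintype.card κ * C := hsum
    refine ih (fun i hi => hs i (mem_insert_of_mem hi)) (fun i hi => hD i (mem_insert_of_mem hi))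
      (Function.update ψ b x₀) fun x => ?_
    have hload : ∑ i ∈ (insert b I)ᶜ with Function.update ψ b x₀ i = x, s i = load x :=
      sum_congr (filter_congr fun i hi => by
        rw [Function.update_of_ne (by rintro rfl; simp at hi)]) fun _ _ => rfl
    rw [← insert_erase (mem_compl.2 hb), ← compl_insert, filter_insert, Function.update_self]
    split_ifs with hx
    · rw [sum_insert (by simp), hload, ← hx]
      linarith [hD b (mem_insert_self b I)]
    · exact hload.trans_le (hψ x)

section Grouping

variable {ι : Type*} [Fintype ι] [DecidableEq ι] {w : ι → ℝ}

lemma sum_fiber_update_add (f : ι → ι) (x r c : ι) :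
    ∑ i with Function.update f x r i = c, w i + (if f x = c then w x else 0) =
      ∑ i with f i = c, w i + (if r = c then w x else 0) := by
  simp only [sum_filter]
  rw [← add_sum_erase _ _ (mem_univ x), ← add_sum_erase _ _ (mem_univ x), Function.update_self,
    sum_congr rfl fun i hi => by rw [Function.update_of_ne (ne_of_mem_erase hi)]]
  ring

lemma sum_fiber_eq_of_notMem {f : ι → ι} {S : Finset ι} (hfix : ∀ i ∉ S, f i = i)
    (hmaps : ∀ i ∈ S, f i ∈ S) {c : ι} (hc : c ∉ S) : ∑ i with f i = c, w i = w c := by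
  rw [sum_eq_single_of_mem c (by simp [hfix c hc])]
  intro i hi hic
  rw [mem_filter] at hi
  by_cases hiS : i ∈ S
  · exact absurd (hi.2 ▸ hmaps i hiS) hc
  · exact (hic (hi.2 ▸ (hfix i hiS).symm)).elim

theorem exists_grouping (hw : ∀ i, 0 ≤ w i) {a : ℝ} (S : Finset ι) (hS : ∀ i ∈ S, w i < a) :
    ∃ f : ι → ι, (∀ i ∉ S, f i = i) ∧ (∀ i ∈ S, f i ∈ S) ∧
      (∀ c ∈ S, ∑ i with f i = c, w i < 2 * a) ∧
      {c | c ∈ S ∧ ∑ i with f i = c, w i ∈ Set.Ioo 0 a}.Subsingleton := by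
  induction S using Finset.induction_on with
  | empty => exact ⟨id, fun _ _ => rfl, by simp, by simp, by simp⟩
  | insert x S hx ih =>
    obtain ⟨f, hfix, hmaps, hlt, hleft⟩ := ih fun i hi => hS i (mem_insert_of_mem hi)
    have hxa : w x < a := hS x (mem_insert_self x S)
    have hfx : f x = x := hfix x hx
    have hfib_x : ∑ i with f i = x, w i = w x := sum_fiber_eq_of_notMem hfix hmaps hx
    by_cases hr : ∃ r ∈ S, ∑ i with f i = r, w i ∈ Set.Ioo 0 a
    · obtain ⟨r, hrS, hrfib⟩ := hr
      have hrx : r ≠ x := by rintro rfl; exact hx hrS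
      set g := Function.update f x r with hgdef
      have hgx : ∑ i with g i = x, w i = 0 := by
        have := sum_fiber_update_add (w := w) f x r x
        rw [hfx, if_pos rfl, if_neg hrx, hfib_x] at this
        linarith
      have hg : ∀ c ≠ x,
          ∑ i with g i = c, w i = ∑ i with f i = c, w i + if r = c then w x else 0 := by
        intro c hcx
        simpa [hfx, hcx.symm] using sum_fiber_update_add (w := w) f x r c
      refine ⟨g, fun i hi => ?_, ?_, ?_, ?_⟩
      · rw [hgdef, Function.update_of_ne (by rintro rfl; exact hi (mem_insert_self _ S))]
        exact hfix i fun h => hi (mem_insert_of_mem h)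
      · rw [forall_mem_insert, hgdef, Function.update_self]
        refine ⟨mem_insert_of_mem hrS, fun i hi => ?_⟩
        rw [Function.update_of_ne (by rintro rfl; exact hx hi)]
        exact mem_insert_of_mem (hmaps i hi)
      · rw [forall_mem_insert, hgx]
        refine ⟨by linarith [hw x], fun c hc => ?_⟩
        rw [hg c (fun h => hx (h ▸ hc))]
        split_ifs with hrc
        · subst hrc; linarith [hrfib.2]
        · linarith [hlt c hc]
      · refine (Set.subsingleton_singleton (a := r)).anti fun c ⟨hc, hgc⟩ => ?_
        have hcx : c ≠ x := by rintro rfl; rw [hgx] at hgc; exact lt_irrefl 0 hgc.1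
        have hcS : c ∈ S := (mem_insert.1 hc).resolve_left hcx
        by_contra hcr
        rw [hg c hcx, if_neg (Ne.symm hcr), add_zero] at hgc
        exact hcr (hleft ⟨hcS, hgc⟩ ⟨hrS, hrfib⟩)
    · refine ⟨f, fun i hi => hfix i fun h => hi (mem_insert_of_mem h), ?_, ?_, ?_⟩
      · rw [forall_mem_insert, hfx]
        exact ⟨mem_insert_self x S, fun i hi => mem_insert_of_mem (hmaps i hi)⟩
      · rw [forall_mem_insert, hfib_x]
        exact ⟨by linarith [hw x], hlt⟩
      · refine (Set.subsingleton_singleton (a := x)).anti fun c ⟨hc, hfc⟩ => ?_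
        by_contra hcx
        exact hr ⟨c, (mem_insert.1 hc).resolve_left hcx, hfc⟩

end Grouping

section Stages

variable {n m : ℕ} {p : Fin n → ℝ}

theorem scenarioCost_le_add_of_bagSize_eq_off (hp : ∀ j, 0 ≤ p j) {σ σ' : Fin n → Fin m}
    (S : Finset (Fin m)) {D : ℝ} (hD : 0 ≤ D) (hout : ∀ c ∉ S, bagSize p σ' c = bagSize p σ c)
    (hin : ∀ c ∈ S, bagSize p σ' c ≤ D) (k : ℕ) :
    scenarioCost p σ' (k + 1) ≤ scenarioCost p σ (k + 1) + D := by
  obtain ⟨σ₂, hσ₂⟩ := exists_machineLoad_le_scenarioCost p σ k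
  set C := scenarioCost p σ (k + 1)
  have hsum : ∑ c, bagSize p σ' c ≤ Fintype.card (Fin (k + 1)) * C := calc
    ∑ c, bagSize p σ' c = ∑ i, machineLoad p σ σ₂ i := by rw [sum_bagSize, sum_machineLoad]
    _ ≤ _ := by simpa using sum_le_card_nsmul univ _ C fun i _ => hσ₂ i
  have hkept : ∀ i, ∑ c ∈ Sᶜ with σ₂ c = i, bagSize p σ' c ≤ C + D := fun i => calc
    ∑ c ∈ Sᶜ with σ₂ c = i, bagSize p σ' c = ∑ c ∈ Sᶜ with σ₂ c = i, bagSize p σ c :=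
        sum_congr rfl fun c hc => hout c (mem_compl.1 (mem_filter.1 hc).1)
    _ ≤ ∑ c with σ₂ c = i, bagSize p σ c :=
        sum_le_sum_of_subset_of_nonneg (filter_subset_filter _ (subset_univ _))
          fun c _ _ => bagSize_nonneg p hp σ c
    _ = machineLoad p σ σ₂ i := (machineLoad_eq_sum_bagSize p σ σ₂ i).symm
    _ ≤ C + D := by linarith [hσ₂ i]
  obtain ⟨ψ, hψ⟩ := exists_schedule_le_add hsum S (fun c _ => bagSize_nonneg p hp σ' c) hin σ₂ hkept
  exact scenarioCost_le_of_forall_machineLoad_le p ψ fun i =>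
    (machineLoad_eq_sum_bagSize p σ' ψ i).trans_le (hψ i)

lemma bagSize_update_comp_add (σ : Fin n → Fin m) (r t c : Fin m) :
    bagSize p (Function.update id r t ∘ σ) c + (if r = c then bagSize p σ r else 0) =
      bagSize p σ c + (if t = c then bagSize p σ r else 0) := by
  have hid : ∑ b with id b = c, bagSize p σ b = bagSize p σ c := by simp [filter_eq']
  rw [bagSize_comp, ← hid]
  exact sum_fiber_update_add id r t c

lemma scenarioCost_update_comp_le (hp : ∀ j, 0 ≤ p j) (σ : Fin n → Fin m) (r t : Fin m)
    (k : ℕ) :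
    scenarioCost p (Function.update id r t ∘ σ) (k + 1) ≤
      scenarioCost p σ (k + 1) + bagSize p σ r := by
  obtain ⟨σ₂, hσ₂⟩ := exists_machineLoad_le_scenarioCost p σ k
  refine scenarioCost_le_of_forall_machineLoad_le p σ₂ fun i => ?_
  calc machineLoad p (Function.update id r t ∘ σ) σ₂ i
      ≤ machineLoad p σ σ₂ i + bagSize p σ r := by
        simp only [machineLoad, bagSize, sum_filter, ← sum_add_distrib]
        refine sum_le_sum fun j _ => ?_
        by_cases hj : σ j = r
        · simp only [hj, if_true]
          split_ifs <;> linarith [hp j]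
        · simp [hj]
    _ ≤ scenarioCost p σ (k + 1) + bagSize p σ r := by linarith [hσ₂ i]

theorem exists_regroup_small_bags (hp : ∀ j, 0 ≤ p j) (σ : Fin n → Fin m) {a : ℝ} (ha : 0 ≤ a) :
    ∃ σ' : Fin n → Fin m,
      (∀ c, bagSize p σ' c = bagSize p σ c ∨ bagSize p σ' c < 2 * a) ∧
      {c | bagSize p σ' c ∈ Set.Ioo 0 a}.Subsingleton ∧
      ∀ k, scenarioCost p σ' (k + 1) ≤ scenarioCost p σ (k + 1) + 2 * a := by
  set S := univ.filter fun c => bagSize p σ c < a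
  obtain ⟨f, hfix, hmaps, hlt, hleft⟩ :=
    exists_grouping (bagSize_nonneg p hp σ) S fun c hc => (mem_filter.1 hc).2
  have hout : ∀ c ∉ S, bagSize p (f ∘ σ) c = bagSize p σ c := fun c hc => by
    rw [bagSize_comp, sum_fiber_eq_of_notMem hfix hmaps hc]
  have hin : ∀ c ∈ S, bagSize p (f ∘ σ) c < 2 * a := fun c hc => by
    rw [bagSize_comp]; exact hlt c hc
  refine ⟨f ∘ σ, fun c => ?_, hleft.anti fun c hc => ?_,
    scenarioCost_le_add_of_bagSize_eq_off hp S (by linarith) hout fun c hc => (hin c hc).le⟩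
  · by_cases hc : c ∈ S
    · exact Or.inr (hin c hc)
    · exact Or.inl (hout c hc)
  · have hcS : c ∈ S := by
      by_contra hcS
      have hc' : bagSize p σ c < a := by rw [← hout c hcS]; exact hc.2
      exact hcS (mem_filter.2 ⟨mem_univ c, hc'⟩)
    exact ⟨hcS, (bagSize_comp p σ f c).symm ▸ hc⟩

theorem exists_merge_leftover (hp : ∀ j, 0 ≤ p j) {σ : Fin n → Fin m} {a T : ℝ} (ha : 0 ≤ a)
    (hleft : {c | bagSize p σ c ∈ Set.Ioo 0 a}.Subsingleton) (hT : ∀ c, bagSize p σ c ≤ T)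
    (hsum : a < ∑ j, p j) :
    ∃ σ' : Fin n → Fin m,
      (∀ c, bagSize p σ' c = 0 ∨ bagSize p σ' c ∈ Set.Icc a (T + a)) ∧
      ∀ k, scenarioCost p σ' (k + 1) ≤ scenarioCost p σ (k + 1) + a := by
  have hzero_or_ge : ∀ c, bagSize p σ c ∉ Set.Ioo 0 a → bagSize p σ c = 0 ∨ a ≤ bagSize p σ c := by
    intro c hc
    rcases (bagSize_nonneg p hp σ c).eq_or_lt with h | h
    · exact Or.inl h.symm
    · exact Or.inr (not_lt.1 fun h' => hc ⟨h, h'⟩)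
  by_cases hr : ∃ r, bagSize p σ r ∈ Set.Ioo 0 a
  · obtain ⟨r, hr⟩ := hr
    obtain ⟨t, htr, ht⟩ : ∃ t ≠ r, bagSize p σ t ≠ 0 := by
      by_contra! h
      have : ∑ j, p j = bagSize p σ r := by
        rw [← sum_bagSize, sum_eq_single r (fun c _ hc => h c hc) (by simp)]
      linarith [hr.2]
    have hta : a ≤ bagSize p σ t := (hzero_or_ge t fun h => htr (hleft h hr)).resolve_left ht
    refine ⟨Function.update id r t ∘ σ, fun c => ?_, fun k =>
      (scenarioCost_update_comp_le hp σ r t k).trans (by linarith [hr.2])⟩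
    have hc := bagSize_update_comp_add (p := p) σ r t c
    by_cases hcr : c = r
    · subst hcr
      rw [if_pos rfl, if_neg htr] at hc
      left; linarith
    · rw [if_neg (Ne.symm hcr)] at hc
      by_cases hct : c = t
      · subst hct
        simp only [if_true] at hc
        right; constructor <;> linarith [hT c, hr.1, hr.2]
      · rw [if_neg (Ne.symm hct)] at hc
        rcases hzero_or_ge c fun h => hcr (hleft h hr) with h | h
        · left; linarith
        · right; constructor <;> linarith [hT c]
  · refine ⟨σ, fun c => ?_, fun k => by linarith⟩
    rcases hzero_or_ge c fun h => hr ⟨c, h⟩ with h | h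
    · exact Or.inl h
    · exact Or.inr ⟨h, by linarith [hT c]⟩

end Stages

theorem stmt2_general (n m : ℕ) (hm : 2 ≤ m)
    (p : Fin n → ℝ) (hp : ∀ j, 0 < p j)
    (q : Fin m → ℝ) (hq : ∀ k, 0 ≤ q k) (hq1 : ∑ k, q k = 1)
    (ε T : ℝ) (hε : 0 < ε) (hε1 : ε < 1 / 100)
    (hT1 : OPTval n m p q ≤ T) (hT2 : T < (1 + ε) * OPTval n m p q) :
    ∃ σ₁ : Fin n → Fin m,
      (∀ b : Fin m, (∃ j, σ₁ j = b) →
        ε * T ≤ bagSize p σ₁ b ∧ bagSize p σ₁ b ≤ (1 + ε) * T) ∧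
      expCost p q σ₁ ≤ (1 + 3 * ε) * T := by
  have : Nonempty (Fin m) := ⟨⟨0, by omega⟩⟩
  have hp0 : ∀ j, 0 ≤ p j := fun j => (hp j).le
  obtain ⟨σ, hσ⟩ := exists_expCost_eq_OPTval p q
  have hOPT : 0 < OPTval n m p q := by nlinarith
  have hεT : 0 ≤ ε * T := by nlinarith
  have hbag : ∀ b, bagSize p σ b ≤ T := fun b =>
    (le_expCost hq hq1 (bagSize_le_scenarioCost p hp0 σ b)).trans (hσ ▸ hT1)
  have htotal : ε * T < ∑ j, p j := by
    have := hσ ▸ expCost_le hq hq1 (scenarioCost_le_sum p hp0 σ)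
    nlinarith
  obtain ⟨σ₁, hsize₁, hleft, hcost₁⟩ := exists_regroup_small_bags hp0 σ hεT
  obtain ⟨σ₂, hsize₂, hcost₂⟩ := exists_merge_leftover hp0 hεT hleft
    (fun c => (hsize₁ c).elim (fun h => h ▸ hbag c) fun h => by nlinarith) htotal
  refine ⟨σ₂, fun b hb => ?_, ?_⟩
  · rcases hsize₂ b with h | ⟨h₁, h₂⟩
    · exact absurd h (bagSize_pos p hp hb).ne'
    · exact ⟨h₁, by linarith⟩
  · calc expCost p q σ₂ ≤ expCost p q σ + 3 * (ε * T) :=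
          expCost_le_expCost_add hq hq1 fun k => by linarith [hcost₁ k, hcost₂ k]
      _ ≤ (1 + 3 * ε) * T := by rw [hσ]; linarith

theorem stmt2 (n m : ℕ) (hn : 0 < n) (hm : 2 ≤ m)
    (p : Fin n → ℝ) (hp : ∀ j, 0 < p j)
    (q : Fin m → ℝ) (hq : ∀ k, 0 ≤ q k) (hq1 : ∑ k, q k = 1)
    (ε T : ℝ) (hε : 0 < ε) (hε1 : ε < 1 / 100)
    (hT1 : OPTval n m p q ≤ T) (hT2 : T < (1 + ε) * OPTval n m p q) :
    ∃ σ₁ : Fin n → Fin m,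
      (∀ b : Fin m, (∃ j, σ₁ j = b) →
        ε * T ≤ bagSize p σ₁ b ∧ bagSize p σ₁ b ≤ (1 + ε) * T) ∧
      expCost p q σ₁ ≤ (1 + 3 * ε) * T :=
  stmt2_general n m hm p hp q hq hq1 ε T hε hε1 hT1 hT2
end

section
/- Let 0 < ε < 1/100 and T > 0, let p_1,…,p_n > 0 be job sizes with total size P, and let k be a positive integer with k > ε·P/(2T). Consider any partition of the jobs into bags where each bag i has total size P(i) and is given an allowed size P'(i) ≥ P(i), such that P'(i) ≤ 2T for every bag i and Σ_i P'(i) ≤ P/ε. Then there exists an assignment of the bags to k machines such that on every machine the total allowed size of the bags assigned to it is at most (3/ε²)·T. -/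
/-! Place the bags one at a time, each on a currently least loaded machine (list scheduling
on the allowed sizes). A least loaded machine carries at most the average load, so every
machine ends with at most `(∑ P') / k + 2T`. The hypotheses on the allowed sizes and on `k`
bound the average by `2T/ε²`, and `2T/ε² + 2T ≤ 3T/ε²` once `ε² ≤ 1/2`. -/

open Finset

section ListScheduling

variable {ι M : Type*} [Fintype M] [Nonempty M]

lemma exists_le_sum_div_card (load : M → ℝ) :
    ∃ i, load i ≤ (∑ j, load j) / Fintype.card M := by
  have hcard : (0 : ℝ) < Fintype.card M := by exact_mod_cast Fintype.card_pos (α := M)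
  obtain ⟨i, -, hi⟩ := exists_le_of_sum_le (f := load)
    (g := fun _ => (∑ j, load j) / Fintype.card M) univ_nonempty (by
      rw [sum_const, card_univ, nsmul_eq_mul, mul_div_cancel₀ _ hcard.ne'])
  exact ⟨i, hi⟩

lemma exists_assignment_load_le_sum_div_card_add [DecidableEq ι] [DecidableEq M]
    (w : ι → ℝ) (C : ℝ) (hC : 0 ≤ C) (hw0 : ∀ b, 0 ≤ w b) (hwC : ∀ b, w b ≤ C)
    (s : Finset ι) :
    ∃ τ : ι → M, ∀ i,
      ∑ b ∈ s with τ b = i, w b ≤ (∑ b ∈ s, w b) / Fintype.card M + C := by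
  induction s using Finset.induction_on with
  | empty => exact ⟨fun _ => Classical.arbitrary M, fun i => by simpa using hC⟩
  | insert a s ha ih =>
    obtain ⟨τ, hτ⟩ := ih
    set load : M → ℝ := fun i => ∑ b ∈ s with τ b = i, w b
    have hload_sum : ∑ i, load i = ∑ b ∈ s, w b := sum_fiberwise s τ w
    obtain ⟨i₀, hi₀⟩ := exists_le_sum_div_card load
    rw [hload_sum] at hi₀
    have havg_mono : (∑ b ∈ s, w b) / Fintype.card M
        ≤ (∑ b ∈ insert a s, w b) / Fintype.card M := by
      rw [sum_insert ha]
      gcongr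
      linarith [hw0 a]
    have hupdate : ∀ b ∈ s, Function.update τ a i₀ b = τ b := fun b hb =>
      Function.update_of_ne (ne_of_mem_of_not_mem hb ha) _ _
    refine ⟨Function.update τ a i₀, fun i => ?_⟩
    rw [filter_insert, Function.update_self, filter_congr fun b hb => by rw [hupdate b hb]]
    by_cases hi : i₀ = i
    · subst hi
      rw [if_pos rfl, sum_insert (by simp [ha])]
      linarith [hwC a]
    · rw [if_neg hi]
      linarith [hτ i]

end ListScheduling

theorem stmt4 (ε T : ℝ) (hε : 0 < ε) (hε1 : ε < 1 / 100) (hT : 0 < T)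
    (n : ℕ) (p : Fin n → ℝ) (hp : ∀ j, 0 < p j)
    (k : ℕ) (hk : 0 < k) (hkP : ε * (∑ j, p j) / (2 * T) < (k : ℝ))
    (m : ℕ) (σ : Fin n → Fin m) (P' : Fin m → ℝ)
    (hP'ge : ∀ b : Fin m, (∑ j ∈ Finset.univ.filter (fun j => σ j = b), p j) ≤ P' b)
    (hP'le : ∀ b : Fin m, P' b ≤ 2 * T)
    (hsum : ∑ b, P' b ≤ (∑ j, p j) / ε) :
    ∃ τ : Fin m → Fin k, ∀ i : Fin k,
      (∑ b ∈ Finset.univ.filter (fun b => τ b = i), P' b) ≤ (3 / ε ^ 2) * T := by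
  have : Nonempty (Fin k) := Fin.pos_iff_nonempty.mp hk
  have hP'0 : ∀ b, 0 ≤ P' b := fun b => (sum_nonneg fun j _ => (hp j).le).trans (hP'ge b)
  obtain ⟨τ, hτ⟩ := exists_assignment_load_le_sum_div_card_add (M := Fin k) P' (2 * T)
    (by positivity) hP'0 hP'le univ
  refine ⟨τ, fun i => (hτ i).trans ?_⟩
  rw [Fintype.card_fin]
  have hk' : (0 : ℝ) < k := by exact_mod_cast hk
  have hP : ∑ j, p j < 2 * T * k / ε := by
    rw [lt_div_iff₀ hε]
    linarith [(div_lt_iff₀ (by positivity : (0 : ℝ) < 2 * T)).mp hkP]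
  have havg : (∑ b, P' b) / k ≤ 2 * T / ε ^ 2 := by
    rw [div_le_iff₀ hk']
    calc ∑ b, P' b ≤ (∑ j, p j) / ε := hsum
      _ ≤ 2 * T * k / ε / ε := by gcongr
      _ = 2 * T / ε ^ 2 * k := by ring
  have hε2 : 2 * ε ^ 2 ≤ 1 := by nlinarith
  calc (∑ b, P' b) / k + 2 * T ≤ 2 * T / ε ^ 2 + 2 * T := by linarith
    _ ≤ 3 / ε ^ 2 * T := by
      rw [div_add' _ _ _ (by positivity), div_mul_eq_mul_div]
      gcongr
      nlinarith
end

section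
/- Let 0 < ε ≤ 1/100 with 1/ε an integer. Let v_1 ≥ v_2 ≥ … ≥ v_m ≥ 0 be reals, let q_1,…,q_m ≥ 0, and set V = Σ_{κ=1}^m q_κ·v_κ. Let k_max ∈ {1,…,m} satisfy q_{k_max} > 0, and let LB > 0 satisfy LB ≤ v_{k_max} < (1+ε)·LB. Then there exists ρ = (1/ε)^r for an integer r with 2 ≤ r ≤ 1/ε + 1, and there exist integers k, k' with 0 ≤ k' < k ≤ k_max, where k satisfies q_k > 0 and k', if nonzero, satisfies q_{k'} > 0, such that: (1) v_k ≤ ρ·LB; (2) if k' ≥ 1 then v_{k'} ≥ (ρ/ε)·LB; (3) Σ_{κ=k'+1}^{k-1} q_κ·v_κ ≤ ε·V. -/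
theorem stmt7 (ε : ℝ) (hε : 0 < ε) (hε1 : ε ≤ 1 / 100)
    (hinv : ∃ N : ℕ, (N : ℝ) * ε = 1)
    (m : ℕ) (hm : 1 ≤ m) (v q : ℕ → ℝ)
    (hmono : ∀ i j, 1 ≤ i → i ≤ j → j ≤ m → v j ≤ v i)
    (hvm : 0 ≤ v m)
    (hq : ∀ κ, 0 ≤ q κ)
    (V : ℝ) (hV : V = ∑ κ ∈ Finset.Icc 1 m, q κ * v κ)
    (kmax : ℕ) (hkmax1 : 1 ≤ kmax) (hkmaxm : kmax ≤ m) (hqk : 0 < q kmax)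
    (LB : ℝ) (hLB : 0 < LB) (hLBle : LB ≤ v kmax) (hLBlt : v kmax < (1 + ε) * LB) :
    ∃ (r k k' : ℕ), 2 ≤ r ∧ (r : ℝ) ≤ 1 / ε + 1 ∧
      k' < k ∧ k ≤ kmax ∧ 0 < q k ∧ (1 ≤ k' → 0 < q k') ∧
      v k ≤ (1 / ε) ^ r * LB ∧
      (1 ≤ k' → ((1 / ε) ^ r / ε) * LB ≤ v k') ∧
      (∑ κ ∈ Finset.Ioo k' k, q κ * v κ) ≤ ε * V := by
  obtain ⟨N, hN⟩ := hinv
  have hεne : ε ≠ 0 := ne_of_gt hε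
  have hNval : (N : ℝ) = 1 / ε := (eq_div_iff hεne).2 hN
  have h1ε : (100 : ℝ) ≤ 1 / ε := by
    rw [le_div_iff₀ hε]; linarith
  have h1ε1 : (1 : ℝ) ≤ 1 / ε := by linarith
  have hNge : 100 ≤ N := by exact_mod_cast hNval ▸ h1ε
  -- values are nonnegative on [1,m]
  have hvnn : ∀ κ, κ ∈ Finset.Icc 1 m → 0 ≤ v κ := by
    intro κ hκ
    rw [Finset.mem_Icc] at hκ
    exact le_trans hvm (hmono κ m hκ.1 hκ.2 le_rfl)
  have hgnn : ∀ κ ∈ Finset.Icc 1 m, 0 ≤ q κ * v κ := fun κ hκ =>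
    mul_nonneg (hq κ) (hvnn κ hκ)
  set W : ℕ → Finset ℕ := fun r => (Finset.Icc 1 kmax).filter
      (fun κ => (1/ε)^r * LB ≤ v κ ∧ v κ < (1/ε)^(r+1) * LB) with hW
  have hWsub : ∀ r, W r ⊆ Finset.Icc 1 m := by
    intro r κ hκ
    rw [hW] at hκ
    simp only [Finset.mem_filter, Finset.mem_Icc] at hκ ⊢
    exact ⟨hκ.1.1, le_trans hκ.1.2 hkmaxm⟩
  have hkey : ∀ r r' : ℕ, r < r' → Disjoint (W r) (W r') := by
    intro r r' hrr'
    rw [Finset.disjoint_left]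
    intro κ h1 h2
    rw [hW] at h1 h2
    simp only [Finset.mem_filter] at h1 h2
    have hpow : (1/ε)^(r+1) ≤ (1/ε)^(r') := pow_le_pow_right₀ h1ε1 hrr'
    have := mul_le_mul_of_nonneg_right hpow (le_of_lt hLB)
    linarith [h1.2.2, h2.2.1]
  have hdisj : (↑(Finset.Icc 2 (N+1)) : Set ℕ).PairwiseDisjoint W := by
    intro r _ r' _ hne
    rcases lt_or_gt_of_ne hne with h | h
    · exact hkey r r' h
    · exact (hkey r' r h).symm
  have hsum : ∑ r ∈ Finset.Icc 2 (N+1), ∑ κ ∈ W r, q κ * v κ ≤ V := by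
    rw [← Finset.sum_biUnion hdisj, hV]
    apply Finset.sum_le_sum_of_subset_of_nonneg
    · intro κ hκ
      rw [Finset.mem_biUnion] at hκ
      obtain ⟨r, _, hκ⟩ := hκ
      exact hWsub r hκ
    · intro κ hκ _
      exact hgnn κ hκ
  -- pigeonhole
  have hpigeon : ∃ r ∈ Finset.Icc 2 (N+1), ∑ κ ∈ W r, q κ * v κ ≤ ε * V := by
    by_contra hcon
    push_neg at hcon
    have hne : (Finset.Icc 2 (N+1)).Nonempty := by
      rw [Finset.nonempty_Icc]; omega
    have hlt : ∑ _r ∈ Finset.Icc 2 (N+1), ε * V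
        < ∑ r ∈ Finset.Icc 2 (N+1), ∑ κ ∈ W r, q κ * v κ :=
      Finset.sum_lt_sum_of_nonempty hne (fun r hr => hcon r hr)
    rw [Finset.sum_const, Nat.card_Icc] at hlt
    have hcard : N + 1 + 1 - 2 = N := by omega
    rw [hcard, nsmul_eq_mul, ← mul_assoc] at hlt
    have hVeq : (N : ℝ) * ε * V = V := by rw [hN, one_mul]
    linarith
  obtain ⟨r, hrmem, hfr⟩ := hpigeon
  rw [Finset.mem_Icc] at hrmem
  -- ρ = (1/ε)^r is large
  have hρ2 : (1/ε)^2 ≤ (1/ε)^r := pow_le_pow_right₀ h1ε1 hrmem.1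
  have h100sq : (10000 : ℝ) ≤ (1/ε)^2 := by nlinarith
  have hρbig : (1 + ε) * LB < (1/ε)^r * LB := by nlinarith
  have hρρ : (1/ε)^r ≤ (1/ε)^(r+1) := pow_le_pow_right₀ h1ε1 (Nat.le_succ r)
  -- define k'
  set S' : Finset ℕ := (Finset.Icc 1 kmax).filter
      (fun κ => (1/ε)^(r+1) * LB ≤ v κ ∧ 0 < q κ) with hS'
  obtain ⟨k', hk'ub, hk'mem⟩ : ∃ k' : ℕ, (∀ κ ∈ S', κ ≤ k') ∧ (1 ≤ k' → k' ∈ S') := by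
    by_cases hne : S'.Nonempty
    · exact ⟨S'.max' hne, fun κ hκ => S'.le_max' κ hκ, fun _ => S'.max'_mem hne⟩
    · refine ⟨0, fun κ hκ => absurd ⟨κ, hκ⟩ hne, by omega⟩
  have hk'lt : k' < kmax := by
    rcases Nat.eq_zero_or_pos k' with h0 | h1
    · omega
    · have hmem := hk'mem h1
      rw [hS', Finset.mem_filter, Finset.mem_Icc] at hmem
      have hvk' : (1/ε)^(r+1) * LB ≤ v k' := hmem.2.1
      have : v kmax < v k' := by
        have := mul_le_mul_of_nonneg_right hρρ (le_of_lt hLB)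
        linarith
      have : k' ≠ kmax := fun h => by rw [h] at this; exact lt_irrefl _ this
      omega
  -- define k
  set S : Finset ℕ := (Finset.Icc (k'+1) kmax).filter
      (fun κ => v κ ≤ (1/ε)^r * LB ∧ 0 < q κ) with hS
  have hkmaxS : kmax ∈ S := by
    rw [hS, Finset.mem_filter, Finset.mem_Icc]
    exact ⟨⟨hk'lt, le_rfl⟩, le_of_lt (lt_trans hLBlt hρbig), hqk⟩
  have hSne : S.Nonempty := ⟨kmax, hkmaxS⟩
  set k := S.min' hSne with hk
  have hkmem : k ∈ S := S.min'_mem hSne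
  rw [hS, Finset.mem_filter, Finset.mem_Icc] at hkmem
  obtain ⟨⟨hk1, hk2⟩, hk3, hk4⟩ := hkmem
  refine ⟨r, k, k', hrmem.1, ?_, by omega, hk2, hk4, ?_, hk3, ?_, ?_⟩
  · have : (r : ℝ) ≤ (N : ℝ) + 1 := by exact_mod_cast hrmem.2
    rw [hNval] at this; linarith
  · intro h1
    have hmem := hk'mem h1
    rw [hS', Finset.mem_filter] at hmem
    exact hmem.2.2
  · intro h1
    have hmem := hk'mem h1
    rw [hS', Finset.mem_filter] at hmem
    have : (1/ε)^r / ε = (1/ε)^(r+1) := by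
      rw [pow_succ]; field_simp
    rw [this]
    exact hmem.2.1
  -- the gap sum
  · have hstep : ∑ κ ∈ Finset.Ioo k' k, q κ * v κ
        = ∑ κ ∈ (Finset.Ioo k' k).filter (fun κ => 0 < q κ), q κ * v κ := by
      refine (Finset.sum_filter_of_ne ?_).symm
      intro x _ hne
      rcases lt_or_eq_of_le (hq x) with h | h
      · exact h
      · exact absurd (by rw [← h, zero_mul]) hne
    have hsubW : (Finset.Ioo k' k).filter (fun κ => 0 < q κ) ⊆ W r := by
      intro κ hκ
      rw [Finset.mem_filter, Finset.mem_Ioo] at hκ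
      obtain ⟨⟨hκ1, hκ2⟩, hκ3⟩ := hκ
      have hκkmax : κ ≤ kmax := le_trans (le_of_lt hκ2) hk2
      have hκnotS : κ ∉ S := fun hmem => absurd (S.min'_le κ hmem) (not_le.2 hκ2)
      have hκnotS' : κ ∉ S' := fun hmem => absurd (hk'ub κ hmem) (by omega)
      rw [hS, Finset.mem_filter, Finset.mem_Icc] at hκnotS
      rw [hS', Finset.mem_filter, Finset.mem_Icc] at hκnotS'
      push_neg at hκnotS hκnotS'
      have hlow : (1/ε)^r * LB ≤ v κ := by
        have := hκnotS ⟨hκ1, hκkmax⟩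
        rcases le_or_gt (v κ) ((1/ε)^r * LB) with h | h
        · exact absurd hκ3 (not_lt.2 (this h))
        · exact le_of_lt h
      have hhigh : v κ < (1/ε)^(r+1) * LB := by
        have := hκnotS' ⟨by omega, hκkmax⟩
        rcases lt_or_ge (v κ) ((1/ε)^(r+1) * LB) with h | h
        · exact h
        · exact absurd hκ3 (not_lt.2 (this h))
      rw [hW, Finset.mem_filter, Finset.mem_Icc]
      exact ⟨⟨by omega, hκkmax⟩, hlow, hhigh⟩
    rw [hstep]
    refine le_trans (Finset.sum_le_sum_of_subset_of_nonneg hsubW ?_) hfr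
    intro κ hκ _
    exact hgnn κ (hWsub r hκ)
end

section
/- Let 0 < ε < 1/100. In the two-stage stochastic Santa Claus problem, let k_max be a scenario with q_{k_max} > 0 and OPT_{k_max} ≥ ε·OPT, let LB > 0 satisfy LB ≤ OPT_{k_max} < (1+ε)·LB, and let UB = ρ·LB where ρ ≥ 1/ε². Then every partition of the jobs into m bags contains at least one bag whose total job size is at most UB; in particular, at most m−1 jobs have size greater than UB. -/
/-- Scenario-`k` Santa Claus value of a first-stage assignment: the maximum over
second-stage assignments of the minimum machine load on `k` machines. -/
noncomputable def santaVal {n m : ℕ} (p : Fin n → ℝ) (σ₁ : Fin n → Fin m) (k : ℕ) : ℝ :=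
  ⨆ σ₂ : Fin m → Fin k, ⨅ i : Fin k, machineLoad p σ₁ σ₂ i

/-- Expected Santa Claus value of a first-stage assignment (scenario `κ : Fin m`
has `κ.val + 1` machines). -/
noncomputable def santaExp {n m : ℕ} (p : Fin n → ℝ) (q : Fin m → ℝ)
    (σ₁ : Fin n → Fin m) : ℝ :=
  ∑ κ : Fin m, q κ * santaVal p σ₁ (κ.val + 1)

lemma santaVal_ge_of_bags {n m : ℕ} (p : Fin n → ℝ) (hp : ∀ j, 0 < p j)
    (σ : Fin n → Fin m) (k : ℕ) (hk : k + 1 ≤ m) (UB : ℝ)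
    (h : ∀ b, UB < bagSize p σ b) : UB ≤ santaVal p σ (k + 1) := by
  set σ₂ : Fin m → Fin (k + 1) := fun b => ⟨b.val % (k + 1), Nat.mod_lt _ (Nat.succ_pos k)⟩
    with hσ₂
  have hlow : UB ≤ ⨅ i : Fin (k + 1), machineLoad p σ σ₂ i := by
    apply le_ciInf
    intro i
    have hib : i.val < m := lt_of_lt_of_le i.isLt hk
    have hσ₂b : σ₂ ⟨i.val, hib⟩ = i := by
      simp [hσ₂, Nat.mod_eq_of_lt i.isLt]
    calc UB ≤ bagSize p σ ⟨i.val, hib⟩ := (h _).le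
      _ ≤ machineLoad p σ σ₂ i := by
          apply Finset.sum_le_sum_of_subset_of_nonneg
          · intro j hj
            simp only [Finset.mem_filter, Finset.mem_univ, true_and] at *
            rw [hj, hσ₂b]
          · intro j _ _; exact (hp j).le
  have hsup := le_ciSup (f := fun σ₂' : Fin m → Fin (k + 1) =>
      ⨅ i : Fin (k + 1), machineLoad p σ σ₂' i)
    (Set.Finite.bddAbove (Set.finite_range _)) σ₂
  exact hlow.trans hsup

theorem stmt8 (n m : ℕ) (hn : 0 < n) (hm : 2 ≤ m)
    (p : Fin n → ℝ) (hp : ∀ j, 0 < p j)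
    (q : Fin m → ℝ) (hq : ∀ κ, 0 ≤ q κ) (hq1 : ∑ κ, q κ = 1)
    (ε : ℝ) (hε : 0 < ε) (hε1 : ε < 1 / 100)
    (σopt : Fin n → Fin m)
    (hopt : ∀ σ₁ : Fin n → Fin m, santaExp p q σ₁ ≤ santaExp p q σopt)
    (kmax : Fin m) (hqk : 0 < q kmax)
    (hkmax : ε * santaExp p q σopt ≤ santaVal p σopt (kmax.val + 1))
    (LB : ℝ) (hLB : 0 < LB)
    (hLBle : LB ≤ santaVal p σopt (kmax.val + 1))
    (hLBlt : santaVal p σopt (kmax.val + 1) < (1 + ε) * LB)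
    (ρ UB : ℝ) (hρ : 1 / ε ^ 2 ≤ ρ) (hUB : UB = ρ * LB) :
    (∀ σ : Fin n → Fin m, ∃ b : Fin m, bagSize p σ b ≤ UB) ∧
    (Finset.univ.filter (fun j => UB < p j)).card ≤ m - 1 := by
  have hρpos : 0 < ρ := lt_of_lt_of_le (by positivity) hρ
  have hUBpos : 0 < UB := by rw [hUB]; positivity
  have hLBUB : LB ≤ ε ^ 2 * UB := by
    have h1 : (1 / ε ^ 2) * LB ≤ ρ * LB := mul_le_mul_of_nonneg_right hρ hLB.le
    have h2 : (1 / ε ^ 2) * LB = LB / ε ^ 2 := by ring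
    rw [hUB]
    rw [h2] at h1
    calc LB = ε ^ 2 * (LB / ε ^ 2) := by field_simp
      _ ≤ ε ^ 2 * (ρ * LB) := by nlinarith [sq_nonneg ε]
  -- the optimal expected value is small
  have hEopt : santaExp p q σopt < UB := by
    have h1 : ε * santaExp p q σopt < (1 + ε) * (ε ^ 2 * UB) := by
      calc ε * santaExp p q σopt ≤ santaVal p σopt (kmax.val + 1) := hkmax
        _ < (1 + ε) * LB := hLBlt
        _ ≤ (1 + ε) * (ε ^ 2 * UB) := by nlinarith
    nlinarith [mul_pos hε hUBpos, sq_nonneg ε, mul_pos (mul_pos hε hε) hUBpos]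
  have part1 : ∀ σ : Fin n → Fin m, ∃ b : Fin m, bagSize p σ b ≤ UB := by
    intro σ
    by_contra hcon
    push_neg at hcon
    have hk : ∀ κ : Fin m, UB ≤ santaVal p σ (κ.val + 1) := fun κ =>
      santaVal_ge_of_bags p hp σ κ.val κ.isLt UB hcon
    have hE : UB ≤ santaExp p q σ := by
      unfold santaExp
      calc UB = ∑ κ : Fin m, q κ * UB := by rw [← Finset.sum_mul, hq1, one_mul]
        _ ≤ ∑ κ : Fin m, q κ * santaVal p σ (κ.val + 1) :=
            Finset.sum_le_sum (fun κ _ => mul_le_mul_of_nonneg_left (hk κ) (hq κ))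
    linarith [hopt σ]
  refine ⟨part1, ?_⟩
  by_contra hcard
  push_neg at hcard
  have hm' : m ≤ (Finset.univ.filter (fun j => UB < p j)).card := by omega
  obtain ⟨T, hTsub, hTcard⟩ := Finset.exists_subset_card_eq hm'
  have : (2 : ℕ) ≤ m := hm
  haveI : NeZero m := ⟨by omega⟩
  set g : Fin m → Fin n := fun b => ((T.orderIsoOfFin hTcard b : T) : Fin n) with hg
  have hginj : Function.Injective g := by
    intro a b hab
    exact (T.orderIsoOfFin hTcard).injective (Subtype.ext hab)
  set σ : Fin n → Fin m := Function.invFun g with hσ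
  have hσg : ∀ b, σ (g b) = b := fun b => Function.leftInverse_invFun hginj b
  obtain ⟨b, hb⟩ := part1 σ
  have hgb : UB < p (g b) := by
    have : g b ∈ Finset.univ.filter (fun j => UB < p j) :=
      hTsub ((T.orderIsoOfFin hTcard b).2)
    simpa using this
  have hmem : g b ∈ Finset.univ.filter (fun j => σ j = b) := by
    simp [hσg b]
  have : p (g b) ≤ bagSize p σ b :=
    Finset.single_le_sum (fun j _ => (hp j).le) hmem
  linarith
end

section
/- Let 0 < ε < 1/100, let B > 0, let κ be a positive integer, and let C > 0 satisfy B ≤ ε·C. Let p_1,…,p_n > 0 be job sizes and suppose there exists an assignment of the jobs to κ machines whose minimum machine load is at least C. Then for every partition of the jobs into bags in which every job of size greater than B is alone in its bag and every bag not containing such a job has total size at most 3B, there exists an assignment of the bags to the κ machines whose minimum machine load is at least (1−3ε)·C. -/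
/-!
Keep every job of size greater than `B` on its machine under the given schedule; its bag contains
nothing else. If the big jobs put load `L i` on machine `i`, the small jobs of the given schedule
put at least `C - L i` there, so the bags without a big job carry at least `∑ i, max 0 (C - L i)`
in total. Hand these bags out greedily, machine by machine: a machine that still needs
`C - L i - 3B > 0` receives bags whose total lies between this need and `C - L i`, which is possible
because every such bag has size at most `3B`. The supply never runs out, and every machine ends with
load at least `C - 3B ≥ (1 - 3ε) C`.
-/

open Finset

theorem Finset.exists_subset_sum_mem_Icc {β : Type*} (w : β → ℝ) (δ : ℝ) (S : Finset β)
    (hw : ∀ b ∈ S, 0 ≤ w b ∧ w b ≤ δ) {t : ℝ} (ht : 0 < t) (htS : t ≤ ∑ b ∈ S, w b) :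
    ∃ T ⊆ S, ∑ b ∈ T, w b ∈ Set.Icc t (t + δ) := by
  induction S using Finset.cons_induction generalizing t with
  | empty => simp only [sum_empty] at htS; linarith
  | cons a S ha ih =>
    rw [sum_cons] at htS
    obtain ⟨hwa, hwaδ⟩ := hw a (mem_cons_self a S)
    by_cases hta : t ≤ w a
    · exact ⟨{a}, by simp, by simp only [sum_singleton, Set.mem_Icc]; constructor <;> linarith⟩
    · obtain ⟨T, hTS, hT⟩ := ih (fun b hb => hw b (mem_cons_of_mem hb)) (t := t - w a)
        (by linarith) (by linarith)
      refine ⟨cons a T (fun h => ha (hTS h)), cons_subset_cons.mpr hTS, ?_⟩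
      rw [sum_cons]
      constructor <;> linarith [hT.1, hT.2]

theorem exists_forall_le_sum_filter_eq {α β : Type*} [DecidableEq α] [DecidableEq β] [Nonempty α]
    (w : β → ℝ) {δ : ℝ} (hδ : 0 ≤ δ) (t : α → ℝ) (I : Finset α) (S : Finset β)
    (hw : ∀ b ∈ S, 0 ≤ w b ∧ w b ≤ δ) (hS : ∑ i ∈ I, max 0 (t i + δ) ≤ ∑ b ∈ S, w b) :
    ∃ f : β → α, ∀ i ∈ I, t i ≤ ∑ b ∈ S with f b = i, w b := by
  induction I using Finset.cons_induction generalizing S with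
  | empty => exact ⟨fun _ => Classical.arbitrary α, by simp⟩
  | cons a I ha ih =>
    rw [sum_cons] at hS
    have hnonneg : ∀ U ⊆ S, 0 ≤ ∑ b ∈ U, w b := fun U hU => sum_nonneg fun b hb => (hw b (hU hb)).1
    have hmono : ∀ U V, U ⊆ V → V ⊆ S → ∑ b ∈ U, w b ≤ ∑ b ∈ V, w b := fun U V hUV hV =>
      sum_le_sum_of_subset_of_nonneg hUV fun b hb _ => (hw b (hV hb)).1
    have hrest : 0 ≤ ∑ i ∈ I, max 0 (t i + δ) := sum_nonneg fun i _ => le_max_left 0 (t i + δ)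
    by_cases hta : t a ≤ 0
    · obtain ⟨f, hf⟩ := ih S hw (by linarith [le_max_left 0 (t a + δ)])
      exact ⟨f, (forall_mem_cons ha _).mpr ⟨hta.trans (hnonneg _ (filter_subset _ _)), hf⟩⟩
    · obtain ⟨T, hTS, hT⟩ := S.exists_subset_sum_mem_Icc w δ hw (not_le.mp hta)
        (by linarith [le_max_right 0 (t a + δ)])
      obtain ⟨f, hf⟩ := ih (S \ T) (fun b hb => hw b (mem_sdiff.mp hb).1)
        (by rw [sum_sdiff_eq_sub hTS]; linarith [le_max_right 0 (t a + δ), hT.2])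
      refine ⟨fun b => if b ∈ T then a else f b, (forall_mem_cons ha _).mpr ⟨?_, fun i hi => ?_⟩⟩
      · refine hT.1.trans (hmono _ _ (fun b hb => ?_) (filter_subset _ _))
        simp [hb, hTS hb]
      · refine (hf i hi).trans (hmono _ _ (fun b hb => ?_) (filter_subset _ _))
        simp only [mem_filter, mem_sdiff] at hb ⊢
        simp [hb]

theorem exists_bag_map_eq_of_alone {ι β M : Type*} (σ : ι → β) (big : ι → Prop) [DecidablePred big]
    (halone : ∀ j j', big j → σ j' = σ j → j' = j) (τ : ι → M) (f : β → M) :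
    ∃ τ' : β → M, ∀ j, τ' (σ j) = if big j then τ j else f (σ j) := by
  let σ' : {j // big j} → β := fun j => σ j
  have hσ' : σ'.Injective := fun j j' h => Subtype.ext (halone j j' j.2 h.symm).symm
  refine ⟨Function.extend σ' (fun j => τ j) f, fun j => ?_⟩
  split_ifs with hj
  · exact hσ'.extend_apply _ f ⟨j, hj⟩
  · exact Function.extend_apply' _ f _ fun ⟨⟨j', hbig⟩, hj'⟩ =>
      hj (by rwa [halone j' j hbig hj'.symm])

section Bags

variable {ι β M : Type*} [Fintype ι] [DecidableEq β]

def bagLoad (σ : ι → β) (p : ι → ℝ) (b : β) : ℝ := ∑ j with σ j = b, p j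

theorem sum_bagLoad (σ : ι → β) (p : ι → ℝ) (T : Finset β) :
    ∑ b ∈ T, bagLoad σ p b = ∑ j with σ j ∈ T, p j :=
  sum_fiberwise_eq_sum_filter univ T σ p

theorem exists_bag_assignment_sub_le_load [Fintype β] [Fintype M] [DecidableEq M] [Nonempty M]
    (σ : ι → β) (p : ι → ℝ) (hp : ∀ j, 0 ≤ p j) (big : ι → Prop) [DecidablePred big]
    (halone : ∀ j j', big j → σ j' = σ j → j' = j) {δ : ℝ} (hδ : 0 ≤ δ)
    (hsmall : ∀ b, (∀ j, σ j = b → ¬ big j) → bagLoad σ p b ≤ δ)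
    (C : ℝ) (τ : ι → M) (hτ : ∀ i, C ≤ ∑ j with τ j = i, p j) :
    ∃ τ' : β → M, ∀ i, C - δ ≤ ∑ j with τ' (σ j) = i, p j := by
  set S : Finset β := {b | ∀ j, σ j = b → ¬ big j}
  have mem_S : ∀ j, σ j ∈ S ↔ ¬ big j := fun j => by
    simp only [S, mem_filter, mem_univ, true_and]
    exact ⟨fun h => h j rfl, fun hj j' hj' hbig => hj (by rwa [halone j' j hbig hj'.symm])⟩
  have hsplit : ∀ P : ι → Prop, [DecidablePred P] →
      ∑ j with P j, p j = ∑ j with P j ∧ big j, p j + ∑ j with P j ∧ ¬ big j, p j := by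
    intro P _
    rw [← sum_filter_add_sum_filter_not _ big, filter_filter, filter_filter]
  set L : M → ℝ := fun i => ∑ j with τ j = i ∧ big j, p j
  have hsupply : ∑ i, max 0 (C - L i - δ + δ) ≤ ∑ b ∈ S, bagLoad σ p b := calc
    ∑ i, max 0 (C - L i - δ + δ) ≤ ∑ i, ∑ j with τ j = i ∧ ¬ big j, p j := by
      refine sum_le_sum fun i _ => max_le (sum_nonneg fun j _ => hp j) ?_
      linarith [hτ i, hsplit (τ · = i)]
    _ = ∑ j with ¬ big j, p j := by
      rw [← sum_fiberwise (univ.filter (¬ big ·)) τ p]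
      simp only [filter_filter, and_comm]
    _ = ∑ b ∈ S, bagLoad σ p b := by
      rw [sum_bagLoad]
      exact sum_congr (filter_congr fun j _ => (mem_S j).symm) fun _ _ => rfl
  obtain ⟨f, hf⟩ := exists_forall_le_sum_filter_eq (bagLoad σ p) hδ (fun i => C - L i - δ) univ S
    (fun b hb => ⟨sum_nonneg fun j _ => hp j, hsmall b (mem_filter.mp hb).2⟩) hsupply
  obtain ⟨τ', hτ'⟩ := exists_bag_map_eq_of_alone σ big halone τ f
  refine ⟨τ', fun i => ?_⟩
  have hL : ∑ j with τ' (σ j) = i ∧ big j, p j = L i :=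
    sum_congr (filter_congr fun j _ => and_congr_left fun hj => by rw [hτ', if_pos hj])
      fun _ _ => rfl
  have hrest : ∑ b ∈ S with f b = i, bagLoad σ p b = ∑ j with τ' (σ j) = i ∧ ¬ big j, p j := by
    rw [sum_bagLoad]
    refine sum_congr (filter_congr fun j _ => ?_) fun _ _ => rfl
    rw [mem_filter, mem_S, and_comm]
    exact and_congr_left fun hj => by rw [hτ', if_neg hj]
  linarith [hsplit fun j => τ' (σ j) = i, hf i (mem_univ i)]

end Bags

theorem stmt9_general (ε B C : ℝ) (hB : 0 < B)
    (κ : ℕ) (hκ : 0 < κ) (hBC : B ≤ ε * C)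
    (n : ℕ) (p : Fin n → ℝ) (hp : ∀ j, 0 < p j)
    (τ : Fin n → Fin κ)
    (hτ : ∀ i : Fin κ, C ≤ ∑ j ∈ Finset.univ.filter (fun j => τ j = i), p j)
    (m : ℕ) (σ : Fin n → Fin m)
    (halone : ∀ j j', B < p j → σ j' = σ j → j' = j)
    (hsmall : ∀ b : Fin m, (∀ j, σ j = b → p j ≤ B) →
        (∑ j ∈ Finset.univ.filter (fun j => σ j = b), p j) ≤ 3 * B) :
    ∃ τ' : Fin m → Fin κ, ∀ i : Fin κ,
      (1 - 3 * ε) * C ≤ ∑ j ∈ Finset.univ.filter (fun j => τ' (σ j) = i), p j := by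
  have : Nonempty (Fin κ) := ⟨⟨0, hκ⟩⟩
  obtain ⟨τ', hτ'⟩ := exists_bag_assignment_sub_le_load σ p (fun j => (hp j).le) (B < p ·) halone
    (by linarith) (fun b hb => hsmall b fun j hj => not_lt.mp (hb j hj)) C τ hτ
  exact ⟨τ', fun i => by linarith [hτ' i]⟩

theorem stmt9 (ε B C : ℝ) (hε : 0 < ε) (hε1 : ε < 1 / 100) (hB : 0 < B)
    (κ : ℕ) (hκ : 0 < κ) (hC : 0 < C) (hBC : B ≤ ε * C)
    (n : ℕ) (p : Fin n → ℝ) (hp : ∀ j, 0 < p j)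
    (τ : Fin n → Fin κ)
    (hτ : ∀ i : Fin κ, C ≤ ∑ j ∈ Finset.univ.filter (fun j => τ j = i), p j)
    (m : ℕ) (σ : Fin n → Fin m)
    (halone : ∀ j j', B < p j → σ j' = σ j → j' = j)
    (hsmall : ∀ b : Fin m, (∀ j, σ j = b → p j ≤ B) →
        (∑ j ∈ Finset.univ.filter (fun j => σ j = b), p j) ≤ 3 * B) :
    ∃ τ' : Fin m → Fin κ, ∀ i : Fin κ,
      (1 - 3 * ε) * C ≤ ∑ j ∈ Finset.univ.filter (fun j => τ' (σ j) = i), p j :=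
  stmt9_general ε B C hB κ hκ hBC n p hp τ hτ m σ halone hsmall
end

section
/- Let 0 < ε < 1/100 with 1/ε an integer, and let LB > 0. Let s > 0 satisfy s ≥ (ε − 3ε²)·LB, and let a = max{(ε + rε²)·LB : r an integer with r ≥ −3 and (ε + rε²)·LB ≤ s} be the allowed size of a tight bag of total job size s. Then a ≥ ε²·s. -/
theorem stmt12 (ε LB : ℝ) (hε : 0 < ε) (hε1 : ε < 1 / 100)
    (hinv : ∃ N : ℕ, (N : ℝ) * ε = 1) (hLB : 0 < LB)
    (s : ℝ) (hs : 0 < s) (hs' : (ε - 3 * ε ^ 2) * LB ≤ s)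
    (a : ℝ)
    (ha : IsGreatest {x : ℝ | ∃ r : ℤ, -3 ≤ r ∧ x = (ε + r * ε ^ 2) * LB ∧ x ≤ s} a) :
    ε ^ 2 * s ≤ a := by
  obtain ⟨⟨r, hr, haeq, has⟩, hub⟩ := ha
  have h1 : (ε - 3 * ε ^ 2) * LB ≤ a := by
    apply hub
    exact ⟨-3, le_refl _, by push_cast; ring, hs'⟩
  have h2 : s < a + ε ^ 2 * LB := by
    by_contra h
    push_neg at h
    have hmem : a + ε ^ 2 * LB ∈ {x : ℝ | ∃ r : ℤ, -3 ≤ r ∧ x = (ε + r * ε ^ 2) * LB ∧ x ≤ s} := by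
      refine ⟨r + 1, by omega, ?_, h⟩
      push_cast
      rw [haeq]; ring
    have := hub hmem
    nlinarith [mul_pos (pow_pos hε 2) hLB]
  have hε2 : (0:ℝ) < 1 - ε ^ 2 := by nlinarith
  nlinarith [mul_lt_mul_of_pos_left h2 (pow_pos hε 2),
    mul_le_mul_of_nonneg_left h1 hε2.le, mul_pos hε hLB,
    mul_pos (mul_pos hε hε) (mul_pos hε hLB)]
end

section
/- Fix a real p > 1 and let 0 < ε ≤ 1/100 with 1/ε an integer. Let v_1 ≥ v_2 ≥ … ≥ v_m > 0 be reals, let q_1,…,q_m ≥ 0, set V = Σ_{κ=1}^m q_κ·v_κ, and define the target loads ι(κ) = v_κ/κ^{1/p} for κ = 1,…,m (so ι is strictly decreasing). Let k_max be the maximum index with q_{k_max} > 0 and set LB = ι(k_max). Then there exists ρ = (1/ε)^r for an integer r with 2 ≤ r ≤ 1/ε² + 1, and integers k, k' with 0 ≤ k' < k ≤ k_max, where k satisfies q_k > 0 and k', if nonzero, satisfies q_{k'} > 0, such that: (1) ι(k) ≤ ρ·LB; (2) if k' ≥ 1 then ι(k') ≥ (ρ/ε)·LB; (3) Σ_{κ=k'+1}^{k-1}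 q_κ·v_κ ≤ ε²·V. -/
set_option maxHeartbeats 2000000 in
theorem stmt14 (pp ε : ℝ) (hpp : 1 < pp) (hε : 0 < ε) (hε1 : ε ≤ 1 / 100)
    (hinv : ∃ N : ℕ, (N : ℝ) * ε = 1)
    (m : ℕ) (hm : 1 ≤ m) (v q : ℕ → ℝ)
    (hmono : ∀ i j, 1 ≤ i → i ≤ j → j ≤ m → v j ≤ v i)
    (hvm : 0 < v m)
    (hq : ∀ κ, 0 ≤ q κ)
    (V : ℝ) (hV : V = ∑ κ ∈ Finset.Icc 1 m, q κ * v κ)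
    (kmax : ℕ) (hkmax1 : 1 ≤ kmax) (hkmaxm : kmax ≤ m)
    (hqk : 0 < q kmax) (hkmaxmax : ∀ κ, kmax < κ → κ ≤ m → q κ = 0)
    (LB : ℝ) (hLB : LB = v kmax / (kmax : ℝ) ^ (1 / pp)) :
    ∃ (r k k' : ℕ), 2 ≤ r ∧ (r : ℝ) ≤ 1 / ε ^ 2 + 1 ∧
      k' < k ∧ k ≤ kmax ∧ 0 < q k ∧ (1 ≤ k' → 0 < q k') ∧
      v k / (k : ℝ) ^ (1 / pp) ≤ (1 / ε) ^ r * LB ∧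
      (1 ≤ k' → ((1 / ε) ^ r / ε) * LB ≤ v k' / (k' : ℝ) ^ (1 / pp)) ∧
      (∑ κ ∈ Finset.Ioo k' k, q κ * v κ) ≤ ε ^ 2 * V := by
  classical
  obtain ⟨N, hN⟩ := hinv
  have hε' : ε ≠ 0 := ne_of_gt hε
  have hNε : (N : ℝ) = 1 / ε := by field_simp; linarith
  have hε2 : (1:ℝ) ≤ 1/ε := by rw [le_div_iff₀ hε]; linarith
  have hε100 : (100:ℝ) ≤ 1/ε := by rw [le_div_iff₀ hε]; linarith
  set ι : ℕ → ℝ := fun κ => v κ / (κ:ℝ) ^ (1/pp) with hιdef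
  have hvpos : ∀ κ, 1 ≤ κ → κ ≤ m → 0 < v κ := fun κ h1 h2 =>
    lt_of_lt_of_le hvm (hmono κ m h1 h2 le_rfl)
  have hppinv : 0 ≤ 1/pp := by positivity
  have hrpos : ∀ κ : ℕ, 1 ≤ κ → (0:ℝ) < (κ:ℝ) ^ (1/pp) := by
    intro κ hκ
    exact Real.rpow_pos_of_pos (by exact_mod_cast hκ) _
  have hLBpos : 0 < LB := by
    rw [hLB]
    exact div_pos (hvpos kmax hkmax1 hkmaxm) (hrpos kmax hkmax1)
  have hιmono : ∀ i j, 1 ≤ i → i ≤ j → j ≤ m → ι j ≤ ι i := by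
    intro i j h1 hij hjm
    have hij' : (i:ℝ) ^ (1/pp) ≤ (j:ℝ) ^ (1/pp) :=
      Real.rpow_le_rpow (by positivity) (by exact_mod_cast hij) hppinv
    have hvij := hmono i j h1 hij hjm
    have hvi := hvpos i h1 (hij.trans hjm)
    exact div_le_div₀ (le_of_lt hvi) hvij (hrpos i h1) hij'
  -- windows
  set ρf : ℕ → ℝ := fun r => (1/ε)^r * LB with hρf
  have hρpos : ∀ r, 0 < ρf r := fun r => mul_pos (by positivity) hLBpos
  set P : ℕ → ℕ → Prop := fun r κ => ρf r ≤ ι κ ∧ ι κ < ρf r / ε with hP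
  set T := Finset.Icc 2 (N^2+1) with hT
  set S : ℕ → ℝ := fun r => ∑ κ ∈ Finset.Icc 1 m, if P r κ then q κ * v κ else 0 with hS
  have hstep : ∀ r, ρf r / ε = ρf (r+1) := by
    intro r
    simp only [hρf, pow_succ]
    field_simp
  have hdisj : ∀ r1 r2 κ, r1 < r2 → P r1 κ → P r2 κ → False := by
    intro r1 r2 κ hlt h1 h2
    have h3 : ρf (r1+1) ≤ ρf r2 := by
      apply mul_le_mul_of_nonneg_right _ hLBpos.le
      exact pow_le_pow_right₀ hε2 (by omega)
    have := h1.2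
    rw [hstep] at this
    linarith [h2.1]
  have hqv : ∀ κ, κ ∈ Finset.Icc 1 m → 0 ≤ q κ * v κ := by
    intro κ hκ
    rw [Finset.mem_Icc] at hκ
    exact mul_nonneg (hq κ) (hvpos κ hκ.1 hκ.2).le
  have hSsum : ∑ r ∈ T, S r ≤ V := by
    rw [hV, hS]
    rw [Finset.sum_comm]
    apply Finset.sum_le_sum
    intro κ hκ
    rw [← Finset.sum_filter]
    rw [Finset.sum_const]
    have hcard : (T.filter (fun r => P r κ)).card ≤ 1 := by
      apply Finset.card_le_one.2
      intro a ha b hb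
      rw [Finset.mem_filter] at ha hb
      rcases lt_trichotomy a b with h | h | h
      · exact (hdisj a b κ h ha.2 hb.2).elim
      · exact h
      · exact (hdisj b a κ h hb.2 ha.2).elim
    rw [nsmul_eq_mul]
    calc ((T.filter (fun r => P r κ)).card : ℝ) * (q κ * v κ)
        ≤ 1 * (q κ * v κ) := by
          apply mul_le_mul_of_nonneg_right _ (hqv κ hκ)
          exact_mod_cast hcard
      _ = q κ * v κ := one_mul _
  have hN1 : 1 ≤ N := by
    rcases Nat.eq_zero_or_pos N with h | h
    · exfalso; rw [h] at hN; norm_num at hN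
    · exact h
  have hTcard : T.card = N^2 := by
    rw [hT, Nat.card_Icc]; omega
  have hTne : T.Nonempty := by
    rw [hT]
    exact ⟨2, Finset.mem_Icc.2 ⟨le_refl 2, by nlinarith⟩⟩
  have hN2 : ((N:ℝ))^2 * ε^2 = 1 := by nlinarith [hN]
  have hex : ∃ r ∈ T, S r ≤ ε^2 * V := by
    by_contra hcon
    push_neg at hcon
    have hlt : ∑ _r ∈ T, ε^2*V < ∑ r ∈ T, S r :=
      Finset.sum_lt_sum_of_nonempty hTne (fun r hr => hcon r hr)
    rw [Finset.sum_const, hTcard, nsmul_eq_mul] at hlt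
    have : ((N^2 : ℕ) : ℝ) = ((N:ℝ))^2 := by push_cast; ring
    rw [this] at hlt
    have hVeq : ((N:ℝ))^2 * (ε^2 * V) = V := by rw [← mul_assoc, hN2, one_mul]
    linarith
  obtain ⟨r, hrT, hSr⟩ := hex
  rw [hT, Finset.mem_Icc] at hrT
  have hρ1 : (1:ℝ) ≤ (1/ε)^r := one_le_pow₀ hε2
  -- the sets A and B
  set A := (Finset.Icc 1 kmax).filter (fun κ => 0 < q κ ∧ ι κ ≤ ρf r) with hA
  have hkmaxA : kmax ∈ A := by
    rw [hA, Finset.mem_filter, Finset.mem_Icc]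
    refine ⟨⟨hkmax1, le_rfl⟩, hqk, ?_⟩
    have : ι kmax = LB := by rw [hιdef, hLB]
    rw [this, hρf]
    exact le_mul_of_one_le_left hLBpos.le hρ1
  have hAne : A.Nonempty := ⟨kmax, hkmaxA⟩
  set k := A.min' hAne with hk
  have hkA : k ∈ A := A.min'_mem hAne
  rw [hA, Finset.mem_filter, Finset.mem_Icc] at hkA
  set B := (Finset.Icc 1 kmax).filter (fun κ => 0 < q κ ∧ ρf r / ε ≤ ι κ) with hB
  set k' := if hBne : B.Nonempty then B.max' hBne else 0 with hk'
  have hk'B : B.Nonempty → k' ∈ B := by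
    intro hBne; rw [hk', dif_pos hBne]; exact B.max'_mem hBne
  have hρlt : ρf r < ρf r / ε := by
    rw [lt_div_iff₀ hε]
    nlinarith [hρpos r]
  have hk'lt : k' < k := by
    by_cases hBne : B.Nonempty
    · have h1 := hk'B hBne
      rw [hB, Finset.mem_filter, Finset.mem_Icc] at h1
      by_contra hcon
      push_neg at hcon
      have := hιmono k k' hkA.1.1 hcon (h1.1.2.trans hkmaxm)
      linarith [h1.2.2, hkA.2.2]
    · rw [hk', dif_neg hBne]
      omega
  refine ⟨r, k, k', hrT.1, ?_, hk'lt, hkA.1.2, hkA.2.1, ?_, ?_, ?_, ?_⟩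
  · have : (r:ℝ) ≤ ((N^2+1 : ℕ):ℝ) := by exact_mod_cast hrT.2
    push_cast at this
    rw [hNε] at this
    calc (r:ℝ) ≤ (1/ε)^2 + 1 := this
      _ = 1/ε^2 + 1 := by rw [div_pow, one_pow]
  · intro h1
    have h2 := hk'B (by rw [hk'] at h1; by_contra hc; rw [dif_neg hc] at h1; omega)
    rw [hB, Finset.mem_filter] at h2
    exact h2.2.1
  · exact hkA.2.2
  · intro h1
    have h2 := hk'B (by rw [hk'] at h1; by_contra hc; rw [dif_neg hc] at h1; omega)
    rw [hB, Finset.mem_filter] at h2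
    have : ((1/ε)^r / ε) * LB = ρf r / ε := by rw [hρf]; ring
    rw [this]
    exact h2.2.2
  · -- main sum bound
    calc ∑ κ ∈ Finset.Ioo k' k, q κ * v κ
        ≤ ∑ κ ∈ Finset.Ioo k' k, (if P r κ then q κ * v κ else 0) := by
          apply Finset.sum_le_sum
          intro κ hκ
          rw [Finset.mem_Ioo] at hκ
          rcases eq_or_lt_of_le (hq κ) with hq0 | hq0
          · split <;> simp [← hq0]
          · have hκ1 : 1 ≤ κ := by omega
            have hκkmax : κ ≤ kmax := by omega
            have hP1 : ρf r ≤ ι κ := by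
              by_contra hc
              push_neg at hc
              have : κ ∈ A := by
                rw [hA, Finset.mem_filter, Finset.mem_Icc]
                exact ⟨⟨hκ1, hκkmax⟩, hq0, hc.le⟩
              have := A.min'_le κ this
              rw [← hk] at this
              omega
            have hP2 : ι κ < ρf r / ε := by
              by_contra hc
              push_neg at hc
              have hκB : κ ∈ B := by
                rw [hB, Finset.mem_filter, Finset.mem_Icc]
                exact ⟨⟨hκ1, hκkmax⟩, hq0, hc⟩
              have hBne : B.Nonempty := ⟨κ, hκB⟩
              have := B.le_max' κ hκB
              rw [hk', dif_pos hBne] at hκ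
              omega
            rw [if_pos ⟨hP1, hP2⟩]
      _ ≤ ∑ κ ∈ Finset.Icc 1 m, (if P r κ then q κ * v κ else 0) := by
          apply Finset.sum_le_sum_of_subset_of_nonneg
          · intro κ hκ
            rw [Finset.mem_Ioo] at hκ
            rw [Finset.mem_Icc]
            constructor
            · omega
            · omega
          · intro κ hκ _
            split
            · exact hqv κ hκ
            · exact le_refl 0
      _ = S r := by rw [hS]
      _ ≤ ε^2 * V := hSr
end

section
/- Fix a real p > 1, let 0 < ε < 1, B > 0, let κ be a positive integer, and let C > 0 satisfy κ^{1/p}·B ≤ ε·C. Let p_1,…,p_n > 0 be job sizes and suppose there exists an assignment of the jobs to κ machines whose load vector has ℓ_p norm at most C. Then for every partition of the jobs into bags in which every job of size greater than 2B is alone in its bag and every bag not containing such a job has total size at most 7B, there exists an assignment of the bags to the κ machines whose machine-load vector has ℓ_p norm at most (1+7ε)·C. -/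
open Finset

private lemma fiber_sum {α β : Type*} [Fintype α] [DecidableEq β]
    (g : α → β) (f : α → ℝ) (t : Finset β) :
    ∑ b ∈ t, ∑ a ∈ Finset.univ.filter (fun a => g a = b), f a
      = ∑ a ∈ Finset.univ.filter (fun a => g a ∈ t), f a := by
  rw [← Finset.sum_fiberwise_of_maps_to (g := g) (t := t)
    (fun a ha => (Finset.mem_filter.mp ha).2) f]
  refine Finset.sum_congr rfl fun b hb => Finset.sum_congr ?_ fun _ _ => rfl
  ext a
  simp only [Finset.mem_filter, Finset.mem_univ, true_and]
  constructor
  · intro h; exact ⟨h ▸ hb, h⟩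
  · rintro ⟨-, h⟩; exact h

theorem stmt16 (pp ε B C : ℝ) (hpp : 1 < pp) (hε : 0 < ε) (hε1 : ε < 1) (hB : 0 < B)
    (κ : ℕ) (hκ : 0 < κ) (hC : 0 < C)
    (hBC : (κ : ℝ) ^ (1 / pp) * B ≤ ε * C)
    (n : ℕ) (p : Fin n → ℝ) (hp : ∀ j, 0 < p j)
    (τ : Fin n → Fin κ)
    (hτ : (∑ i : Fin κ, (∑ j ∈ Finset.univ.filter (fun j => τ j = i), p j) ^ pp) ^ (1 / pp) ≤ C)
    (m : ℕ) (σ : Fin n → Fin m)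
    (halone : ∀ j j', 2 * B < p j → σ j' = σ j → j' = j)
    (hsmall : ∀ b : Fin m, (∀ j, σ j = b → p j ≤ 2 * B) →
        (∑ j ∈ Finset.univ.filter (fun j => σ j = b), p j) ≤ 7 * B) :
    ∃ τ' : Fin m → Fin κ,
      (∑ i : Fin κ, (∑ j ∈ Finset.univ.filter (fun j => τ' (σ j) = i), p j) ^ pp) ^ (1 / pp)
        ≤ (1 + 7 * ε) * C := by
  classical
  have hppos : 0 < pp := lt_trans one_pos hpp
  -- bag sizes
  set s : Fin m → ℝ := fun b => ∑ j ∈ Finset.univ.filter (fun j => σ j = b), p j with hsdef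
  have hs_nonneg : ∀ b, 0 ≤ s b := fun b =>
    Finset.sum_nonneg fun j _ => (hp j).le
  -- small bags
  set Small : Finset (Fin m) :=
    Finset.univ.filter (fun b => ∀ j, σ j = b → p j ≤ 2 * B) with hSmalldef
  have hSmall_mem : ∀ j, p j ≤ 2 * B → σ j ∈ Small := by
    intro j hj
    rw [hSmalldef, Finset.mem_filter]
    refine ⟨Finset.mem_univ _, fun j' hj' => ?_⟩
    by_contra h
    push_neg at h
    have := halone j' j h hj'.symm
    subst this
    linarith
  have hSmall_mem' : ∀ j, σ j ∈ Small → p j ≤ 2 * B := by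
    intro j hj
    rw [hSmalldef, Finset.mem_filter] at hj
    exact hj.2 j rfl
  have hsb7 : ∀ b ∈ Small, s b ≤ 7 * B := by
    intro b hb
    rw [hSmalldef, Finset.mem_filter] at hb
    exact hsmall b hb.2
  -- small/big parts of job sizes
  set q : Fin n → ℝ := fun j => if p j ≤ 2 * B then p j else 0 with hqdef
  set r : Fin n → ℝ := fun j => if p j ≤ 2 * B then 0 else p j with hrdef
  have hqr : ∀ j, q j + r j = p j := by
    intro j; rw [hqdef, hrdef]; simp only; split <;> ring
  have hq_nonneg : ∀ j, 0 ≤ q j := by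
    intro j; rw [hqdef]; simp only; split; exacts [(hp j).le, le_refl 0]
  -- capacities
  set c : Fin κ → ℝ := fun i => ∑ j ∈ Finset.univ.filter (fun j => τ j = i), q j with hcdef
  have hc_nonneg : ∀ i, 0 ≤ c i := fun i => Finset.sum_nonneg fun j _ => hq_nonneg j
  set cum : Fin κ → ℝ := fun i => ∑ i' ∈ Finset.univ.filter (fun i' => i' < i), c i' with hcumdef
  have hcum_mono : ∀ i1 i2 : Fin κ, i1 ≤ i2 → cum i1 ≤ cum i2 := by
    intro i1 i2 h
    apply Finset.sum_le_sum_of_subset_of_nonneg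
    · intro x hx
      simp only [Finset.mem_filter, Finset.mem_univ, true_and] at hx ⊢
      exact lt_of_lt_of_le hx h
    · intro x _ _; exact hc_nonneg x
  -- prefix sums of small bags
  set P : Fin m → ℝ := fun b => ∑ b' ∈ Small.filter (fun b' => b' < b), s b' with hPdef
  have hP_nonneg : ∀ b, 0 ≤ P b := fun b => Finset.sum_nonneg fun b' _ => hs_nonneg b'
  have hP_mono : ∀ b1 b2 : Fin m, b1 ≤ b2 → P b1 ≤ P b2 := by
    intro b1 b2 h
    apply Finset.sum_le_sum_of_subset_of_nonneg
    · intro x hx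
      simp only [Finset.mem_filter] at hx ⊢
      exact ⟨hx.1, lt_of_lt_of_le hx.2 h⟩
    · intro x _ _; exact hs_nonneg x
  have i0 : Fin κ := ⟨0, hκ⟩
  have hcum0 : cum ⟨0, hκ⟩ = 0 := by
    rw [hcumdef]
    simp only
    rw [Finset.filter_false_of_mem, Finset.sum_empty]
    intro x _
    simp [Fin.lt_def]
  have hIne : ∀ b : Fin m, (Finset.univ.filter (fun i : Fin κ => cum i ≤ P b)).Nonempty := by
    intro b
    exact ⟨⟨0, hκ⟩, by simp [hcum0, hP_nonneg b]⟩
  -- the bag assignment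
  set τ' : Fin m → Fin κ := fun b =>
    if h : ∃ j, σ j = b ∧ 2 * B < p j then τ h.choose
    else (Finset.univ.filter (fun i : Fin κ => cum i ≤ P b)).max' (hIne b) with hτ'def
  have hτ'big : ∀ j, 2 * B < p j → τ' (σ j) = τ j := by
    intro j hj
    have hex : ∃ j', σ j' = σ j ∧ 2 * B < p j' := ⟨j, rfl, hj⟩
    rw [hτ'def]
    simp only
    rw [dif_pos hex]
    have hspec := hex.choose_spec
    have : hex.choose = j := halone j hex.choose hj hspec.1
    rw [this]
  have hτ'small : ∀ b ∈ Small,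
      τ' b = (Finset.univ.filter (fun i : Fin κ => cum i ≤ P b)).max' (hIne b) := by
    intro b hb
    rw [hτ'def]
    simp only
    rw [dif_neg]
    rintro ⟨j, hj1, hj2⟩
    rw [hSmalldef, Finset.mem_filter] at hb
    exact absurd (hb.2 j hj1) (not_le.mpr hj2)
  have hImem : ∀ b ∈ Small, cum (τ' b) ≤ P b := by
    intro b hb
    rw [hτ'small b hb]
    have := Finset.max'_mem (Finset.univ.filter (fun i : Fin κ => cum i ≤ P b)) (hIne b)
    simpa using this
  have hIle : ∀ b ∈ Small, ∀ i' : Fin κ, cum i' ≤ P b → i' ≤ τ' b := by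
    intro b hb i' hi'
    rw [hτ'small b hb]
    exact Finset.le_max' _ i' (by simpa using hi')
  -- total small mass
  set Stot : ℝ := ∑ b ∈ Small, s b with hStotdef
  have hPs : ∀ b ∈ Small, P b + s b = ∑ b' ∈ Small.filter (fun b' => b' ≤ b), s b' := by
    intro b hb
    have hins : Small.filter (fun b' => b' ≤ b) = insert b (Small.filter (fun b' => b' < b)) := by
      ext b'
      simp only [Finset.mem_filter, Finset.mem_insert]
      constructor
      · rintro ⟨h1, h2⟩
        rcases lt_or_eq_of_le h2 with h | h
        · exact Or.inr ⟨h1, h⟩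
        · exact Or.inl h
      · rintro (h | ⟨h1, h2⟩)
        · exact ⟨h ▸ hb, le_of_eq h⟩
        · exact ⟨h1, le_of_lt h2⟩
    rw [hins, Finset.sum_insert (by simp [Finset.mem_filter])]
    ring
  have hPsle : ∀ b ∈ Small, P b + s b ≤ Stot := by
    intro b hb
    rw [hPs b hb, hStotdef]
    apply Finset.sum_le_sum_of_subset_of_nonneg (Finset.filter_subset _ _)
    intro x _ _; exact hs_nonneg x
  have hctot : ∑ i, c i = Stot := by
    rw [hcdef, hStotdef]
    have h1 := fiber_sum τ q Finset.univ
    simp only [Finset.mem_univ, Finset.filter_true] at h1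
    have h2 := fiber_sum σ p Small
    rw [hsdef]
    simp only
    rw [h2, h1]
    rw [Finset.sum_filter]
    apply Finset.sum_congr rfl
    intro j _
    rw [hqdef]
    simp only
    by_cases hj : p j ≤ 2 * B
    · rw [if_pos hj, if_pos (hSmall_mem j hj)]
    · rw [if_neg hj, if_neg (fun h => hj (hSmall_mem' j h))]
  -- core combinatorial bound
  have hcore : ∀ i : Fin κ,
      ∑ b ∈ Small.filter (fun b => τ' b = i), s b ≤ c i + 7 * B := by
    intro i
    set A := Small.filter (fun b => τ' b = i) with hAdef
    rcases A.eq_empty_or_nonempty with hA | hA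
    · rw [hA, Finset.sum_empty]
      have := hc_nonneg i
      linarith
    · set bs := A.max' hA with hbsdef
      have hbsA : bs ∈ A := A.max'_mem hA
      have hbsS : bs ∈ Small := (Finset.mem_filter.mp hbsA).1
      have hbsi : τ' bs = i := (Finset.mem_filter.mp hbsA).2
      have hcumi : ∀ b ∈ A, cum i ≤ P b := by
        intro b hb
        rw [Finset.mem_filter] at hb
        have := hImem b hb.1
        rwa [hb.2] at this
      set D := Small.filter (fun b => cum i ≤ P b ∧ b ≤ bs) with hDdef
      have hAD : A ⊆ D := by
        intro b hb
        have hb' := Finset.mem_filter.mp hb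
        rw [hDdef, Finset.mem_filter]
        exact ⟨hb'.1, hcumi b hb, A.le_max' b hb⟩
      have step1 : ∑ b ∈ A, s b ≤ ∑ b ∈ D, s b :=
        Finset.sum_le_sum_of_subset_of_nonneg hAD (fun x _ _ => hs_nonneg x)
      have hbsD : bs ∈ D := hAD hbsA
      set b0 := D.min' ⟨bs, hbsD⟩ with hb0def
      have hb0D : b0 ∈ D := D.min'_mem _
      have hb0S : b0 ∈ Small := (Finset.mem_filter.mp hb0D).1
      have hcumb0 : cum i ≤ P b0 := (Finset.mem_filter.mp hb0D).2.1
      have hb0bs : b0 ≤ bs := D.min'_le bs hbsD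
      have hDeq : D = Small.filter (fun b => b0 ≤ b ∧ b ≤ bs) := by
        ext b
        simp only [hDdef, Finset.mem_filter]
        constructor
        · rintro ⟨h1, h2, h3⟩
          refine ⟨h1, ?_, h3⟩
          have hbD : b ∈ D := by
            simp only [hDdef, Finset.mem_filter]; exact ⟨h1, h2, h3⟩
          exact D.min'_le b hbD
        · rintro ⟨h1, h2, h3⟩
          exact ⟨h1, le_trans hcumb0 (hP_mono _ _ h2), h3⟩
      have hdisj : Disjoint (Small.filter (fun b => b < b0))
          (Small.filter (fun b => b0 ≤ b ∧ b ≤ bs)) := by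
        rw [Finset.disjoint_left]
        intro b hb1 hb2
        rw [Finset.mem_filter] at hb1 hb2
        exact absurd hb2.2.1 (not_le.mpr hb1.2)
      have hunion : Small.filter (fun b => b < b0) ∪ Small.filter (fun b => b0 ≤ b ∧ b ≤ bs)
          = Small.filter (fun b => b ≤ bs) := by
        ext b
        simp only [Finset.mem_union, Finset.mem_filter]
        constructor
        · rintro (⟨h1, h2⟩ | ⟨h1, h2, h3⟩)
          · exact ⟨h1, le_trans (le_of_lt h2) hb0bs⟩
          · exact ⟨h1, h3⟩
        · rintro ⟨h1, h2⟩
          rcases lt_or_ge b b0 with h | h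
          · exact Or.inl ⟨h1, h⟩
          · exact Or.inr ⟨h1, h, h2⟩
      have hsplit : P b0 + ∑ b ∈ D, s b = P bs + s bs := by
        rw [hPs bs hbsS, ← hunion, Finset.sum_union hdisj, hDeq, hPdef]
      have step2 : ∑ b ∈ D, s b ≤ P bs + s bs - cum i := by
        have := hsplit
        linarith
      have step3 : P bs + s bs ≤ cum i + c i + 7 * B := by
        by_cases hlast : i.val + 1 < κ
        · set i' : Fin κ := ⟨i.val + 1, hlast⟩ with hi'def
          have h1 : ¬ cum i' ≤ P bs := by
            intro h
            have := hIle bs hbsS i' h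
            rw [hbsi] at this
            have : i.val + 1 ≤ i.val := this
            omega
          have h2 : cum i' = cum i + c i := by
            rw [hcumdef]
            simp only
            have hins : Finset.univ.filter (fun i'' : Fin κ => i'' < i')
                = insert i (Finset.univ.filter (fun i'' : Fin κ => i'' < i)) := by
              ext i''
              simp only [Finset.mem_filter, Finset.mem_univ, true_and, Finset.mem_insert,
                Fin.lt_def, hi'def]
              constructor
              · intro h
                rcases Nat.lt_succ_iff_lt_or_eq.mp h with h | h
                · exact Or.inr h
                · exact Or.inl (Fin.ext h)
              · rintro (h | h)
                · rw [h]; omega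
                · omega
            rw [hins, Finset.sum_insert (by simp)]
            ring
          have hb7 := hsb7 bs hbsS
          push_neg at h1
          rw [h2] at h1
          linarith
        · push_neg at hlast
          have hik : κ = i.val + 1 := le_antisymm hlast i.isLt
          have huniv : (Finset.univ : Finset (Fin κ))
              = insert i (Finset.univ.filter (fun i'' : Fin κ => i'' < i)) := by
            ext i''
            simp only [Finset.mem_univ, Finset.mem_insert, Finset.mem_filter, true_and,
              Fin.lt_def, true_iff]
            have := i''.isLt
            have h' : i''.val < i.val + 1 := by omega
            rcases Nat.lt_succ_iff_lt_or_eq.mp h' with h | h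
            · exact Or.inr h
            · exact Or.inl (Fin.ext h)
          have h2 : Stot = cum i + c i := by
            rw [← hctot, huniv, Finset.sum_insert (by simp), hcumdef]
            ring
          have := hPsle bs hbsS
          linarith
      linarith
  -- per machine bound
  refine ⟨τ', ?_⟩
  set W : Fin κ → ℝ := fun i => ∑ j ∈ Finset.univ.filter (fun j => τ j = i), p j with hWdef
  set W' : Fin κ → ℝ := fun i => ∑ j ∈ Finset.univ.filter (fun j => τ' (σ j) = i), p j with hW'def
  have hW_nonneg : ∀ i, 0 ≤ W i := fun i => Finset.sum_nonneg fun j _ => (hp j).le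
  have hW'_nonneg : ∀ i, 0 ≤ W' i := fun i => Finset.sum_nonneg fun j _ => (hp j).le
  have key : ∀ i, W' i ≤ W i + 7 * B := by
    intro i
    have hWsplit : W i = c i + ∑ j ∈ Finset.univ.filter (fun j => τ j = i), r j := by
      rw [hWdef, hcdef]
      simp only
      rw [← Finset.sum_add_distrib]
      apply Finset.sum_congr rfl
      intro j _
      rw [hqr j]
    have hW'split : W' i = (∑ j ∈ Finset.univ.filter (fun j => τ' (σ j) = i), q j)
        + ∑ j ∈ Finset.univ.filter (fun j => τ' (σ j) = i), r j := by
      rw [hW'def]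
      simp only
      rw [← Finset.sum_add_distrib]
      apply Finset.sum_congr rfl
      intro j _
      rw [hqr j]
    have hr_eq : ∑ j ∈ Finset.univ.filter (fun j => τ' (σ j) = i), r j
        = ∑ j ∈ Finset.univ.filter (fun j => τ j = i), r j := by
      rw [Finset.sum_filter, Finset.sum_filter]
      apply Finset.sum_congr rfl
      intro j _
      by_cases hj : p j ≤ 2 * B
      · have : r j = 0 := by rw [hrdef]; simp [hj]
        rw [this]; simp
      · push_neg at hj
        rw [hτ'big j hj]
    have hq_le : ∑ j ∈ Finset.univ.filter (fun j => τ' (σ j) = i), q j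
        ≤ c i + 7 * B := by
      have heq : ∑ j ∈ Finset.univ.filter (fun j => τ' (σ j) = i), q j
          = ∑ b ∈ Small.filter (fun b => τ' b = i), s b := by
        rw [fiber_sum σ p (Small.filter (fun b => τ' b = i))]
        rw [Finset.sum_filter, Finset.sum_filter]
        apply Finset.sum_congr rfl
        intro j _
        simp only [hqdef]
        by_cases hj : p j ≤ 2 * B
        · rw [if_pos hj]
          by_cases hi : τ' (σ j) = i
          · rw [if_pos hi,
              if_pos (Finset.mem_filter.mpr ⟨hSmall_mem j hj, hi⟩)]
          · have hnot : ¬ (σ j ∈ Small.filter (fun b => τ' b = i)) :=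
              fun h => hi (Finset.mem_filter.mp h).2
            rw [if_neg hi, if_neg hnot]
        · have hnot : ¬ (σ j ∈ Small.filter (fun b => τ' b = i)) :=
              fun h => hj (hSmall_mem' j (Finset.mem_filter.mp h).1)
          rw [if_neg hj, if_neg hnot]
          simp
      rw [heq]
      exact hcore i
    rw [hWsplit, hW'split, hr_eq]
    linarith [hq_le]
  -- analytic conclusion
  have h7 : 0 ≤ 7 * B := by linarith
  have step1 : (∑ i : Fin κ, W' i ^ pp) ^ (1 / pp)
      ≤ (∑ i : Fin κ, (W i + 7 * B) ^ pp) ^ (1 / pp) := by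
    apply Real.rpow_le_rpow
    · exact Finset.sum_nonneg fun i _ => Real.rpow_nonneg (hW'_nonneg i) pp
    · apply Finset.sum_le_sum
      intro i _
      exact Real.rpow_le_rpow (hW'_nonneg i) (key i) hppos.le
    · positivity
  have step2 : (∑ i : Fin κ, (W i + 7 * B) ^ pp) ^ (1 / pp)
      ≤ (∑ i : Fin κ, W i ^ pp) ^ (1 / pp) + (∑ i : Fin κ, (7 * B) ^ pp) ^ (1 / pp) :=
    Real.Lp_add_le_of_nonneg (f := W) (g := fun _ => 7 * B) Finset.univ hpp.le
      (fun i _ => hW_nonneg i) (fun _ _ => h7)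
  have hconst : (∑ _i : Fin κ, (7 * B) ^ pp) ^ (1 / pp) = (κ : ℝ) ^ (1 / pp) * (7 * B) := by
    rw [Finset.sum_const, Finset.card_univ, Fintype.card_fin, nsmul_eq_mul]
    rw [Real.mul_rpow (by positivity) (by positivity)]
    rw [← Real.rpow_mul (by positivity), mul_one_div_cancel (ne_of_gt hppos), Real.rpow_one]
  have hlast : (κ : ℝ) ^ (1 / pp) * (7 * B) ≤ 7 * (ε * C) := by
    have : (κ : ℝ) ^ (1 / pp) * (7 * B) = 7 * ((κ : ℝ) ^ (1 / pp) * B) := by ring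
    rw [this]
    linarith
  calc (∑ i : Fin κ, W' i ^ pp) ^ (1 / pp)
      ≤ (∑ i : Fin κ, (W i + 7 * B) ^ pp) ^ (1 / pp) := step1
    _ ≤ (∑ i : Fin κ, W i ^ pp) ^ (1 / pp) + (∑ i : Fin κ, (7 * B) ^ pp) ^ (1 / pp) := step2
    _ ≤ C + 7 * (ε * C) := by
        rw [hconst]
        exact add_le_add hτ hlast
    _ = (1 + 7 * ε) * C := by ring
end

section
/- Fix a real p > 1, UB > 0, and positive integers k ≤ m. Let p_1,…,p_n > 0 be job sizes whose total size is at most k·UB; call a job huge if its size is greater than 2·UB. Let S be a subset of {k, k+1, …, m} and, for each κ ∈ S, let C_κ > 0. Suppose there exists a partition of the jobs into m bags such that for every κ ∈ S the bags can be assigned to κ machines with machine-load vector of ℓ_p norm at most C_κ. Then there exists a partition of the jobs into m bags with the same property in which, moreover, every huge job is alone in its bag and every bag not containing a huge job has total size at most 4·UB. -/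
/-!
Among the partitions satisfying all the cost bounds, take one minimising the sum of squared bag
sizes. Suppose some bag `b` had a part `R` of positive size whose removal still leaves more than
`2·UB` in `b`. Since the total size is at most `m·UB`, another bag `b'` has size `< UB`, and moving
`R` into `b'` lowers the sum of squares, as `b'` stays lighter than what remains of `b`. It does not
raise any ℓ_p cost: given a machine assignment `τ`, send `b'` to a machine `T` that is least loaded
once `b'` is taken off (its load is then at most `UB`, the total being at most `κ·UB`), and then
send `R` to `T` as well. Each of these two steps moves load from a machine that remains at least as
loaded as the receiving one, which by convexity of `t ↦ t^p` does not increase `Σ W_i^p`. Hence no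
such part exists; taking for `R` the rest of the bag of a huge job, or one job of a bag of size
`> 4·UB` without huge jobs, gives the two structural properties.
-/

open Finset

section Convex

variable {𝕜 : Type*} [Field 𝕜] [LinearOrder 𝕜] [IsStrictOrderedRing 𝕜] {D : Set 𝕜} {f : 𝕜 → 𝕜}

theorem ConvexOn.map_add_add_map_le {s t δ : 𝕜} (hf : ConvexOn 𝕜 D f) (hs : s ∈ D)
    (htδ : t + δ ∈ D) (hst : s ≤ t) (hδ : 0 ≤ δ) : f (s + δ) + f t ≤ f s + f (t + δ) := by
  rcases hδ.eq_or_lt with rfl | hδ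
  · simp
  rcases hst.eq_or_lt with rfl | hst
  · exact (add_comm _ _).le
  have h₁ := hf.secant_mono_aux1 hs htδ (y := s + δ) (by linarith) (by linarith)
  have h₂ := hf.secant_mono_aux1 hs htδ (y := t) hst (by linarith)
  refine le_of_mul_le_mul_left ?_ (by linarith : 0 < t + δ - s)
  linarith

end Convex

section Load

variable {ι β γ : Type*} [Fintype ι] [DecidableEq β] [DecidableEq γ] {p : ι → ℝ}

def load (f : ι → β) (p : ι → ℝ) (b : β) : ℝ :=
  ∑ j ∈ univ.filter (fun j => f j = b), p j

def reassign [DecidableEq ι] (f : ι → β) (D : Finset ι) (y : β) (j : ι) : β :=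
  if j ∈ D then y else f j

theorem load_nonneg (hp : ∀ j, 0 ≤ p j) (f : ι → β) (b : β) : 0 ≤ load f p b :=
  sum_nonneg fun j _ => hp j

theorem sum_load [Fintype β] (f : ι → β) (p : ι → ℝ) : ∑ b, load f p b = ∑ j, p j :=
  sum_fiberwise univ f p

theorem load_le_load (hp : ∀ j, 0 ≤ p j) {f : ι → β} {g : ι → γ} {b : β} {c : γ}
    (h : ∀ j, f j = b → g j = c) : load f p b ≤ load g p c :=
  sum_le_sum_of_subset_of_nonneg (monotone_filter_right _ fun j _ => h j) fun j _ _ => hp j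

theorem load_reassign [DecidableEq ι] {f : ι → β} {D : Finset ι} {x : β} (hD : ∀ j ∈ D, f j = x)
    (y i : β) :
    load (reassign f D y) p i =
      load f p i - (if i = x then ∑ j ∈ D, p j else 0) + (if i = y then ∑ j ∈ D, p j else 0) := by
  have hconst (z : β) :
      (∑ j ∈ D, if z = i then p j else 0) = if i = z then ∑ j ∈ D, p j else 0 := by
    by_cases h : i = z
    · simp [h]
    · simp [Ne.symm h, h]
  have hin : ∑ j ∈ D, (if reassign f D y j = i then p j else 0) =
      if i = y then ∑ j ∈ D, p j else 0 := by
    rw [← hconst]; exact sum_congr rfl fun j hj => by rw [reassign, if_pos hj]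
  have hx : ∑ j ∈ D, (if f j = i then p j else 0) = if i = x then ∑ j ∈ D, p j else 0 := by
    rw [← hconst]; exact sum_congr rfl fun j hj => by rw [hD j hj]
  have hout : ∑ j ∈ Dᶜ, (if reassign f D y j = i then p j else 0) =
      ∑ j ∈ Dᶜ, (if f j = i then p j else 0) :=
    sum_congr rfl fun j hj => by rw [reassign, if_neg (mem_compl.1 hj)]
  simp only [load, sum_filter]
  rw [← sum_add_sum_compl D, ← sum_add_sum_compl D (fun j => if f j = i then p j else 0), hin, hx,
    hout]
  ring

variable [Fintype γ]

theorem exists_ne_load_lt {σ : ι → γ} {a : ℝ} (htot : ∑ j, p j ≤ Fintype.card γ * a) {b : γ}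
    (hb : a < load σ p b) : ∃ c ≠ b, load σ p c < a := by
  have h₁ := add_sum_erase univ (load σ p) (mem_univ b)
  have h₂ : a + ∑ _c ∈ univ.erase b, a = Fintype.card γ * a := by
    rw [add_sum_erase _ (fun _ => a) (mem_univ b)]
    simp
  rw [sum_load] at h₁
  obtain ⟨c, hc, hlt⟩ := exists_lt_of_sum_lt (s := univ.erase b) (f := load σ p) (g := fun _ => a)
    (by linarith)
  exact ⟨c, ne_of_mem_erase hc, hlt⟩

variable [DecidableEq ι]

theorem sum_map_load_reassign_sub {f : ι → γ} {D : Finset ι} {x y : γ} (hD : ∀ j ∈ D, f j = x)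
    (hxy : x ≠ y) (φ : ℝ → ℝ) :
    ∑ i, φ (load (reassign f D y) p i) - ∑ i, φ (load f p i) =
      φ (load f p x - ∑ j ∈ D, p j) - φ (load f p x) +
        (φ (load f p y + ∑ j ∈ D, p j) - φ (load f p y)) := by
  rw [← sum_sub_distrib, ← sum_subset (subset_univ {x, y}), sum_pair hxy]
  · simp [load_reassign hD, hxy, hxy.symm]
  · intro i _ hi
    simp only [mem_insert, mem_singleton, not_or] at hi
    simp [load_reassign hD, hi.1, hi.2]

theorem sum_load_rpow_reassign_le {q : ℝ} (hq : 1 ≤ q) (hp : ∀ j, 0 ≤ p j) {f : ι → γ}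
    {D : Finset ι} {x y : γ} (hD : ∀ j ∈ D, f j = x)
    (hxy : x ≠ y → load f p y + ∑ j ∈ D, p j ≤ load f p x) :
    ∑ i, load (reassign f D y) p i ^ q ≤ ∑ i, load f p i ^ q := by
  rcases eq_or_ne x y with rfl | hne
  · simp [load_reassign hD]
  have h := (convexOn_rpow hq).map_add_add_map_le (load_nonneg hp f y)
    (t := load f p x - ∑ j ∈ D, p j) (δ := ∑ j ∈ D, p j) (by simpa using load_nonneg hp f x)
    (by linarith [hxy hne]) (sum_nonneg fun j _ => hp j)
  have := sum_map_load_reassign_sub (p := p) hD hne (· ^ q)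
  simp only [sub_add_cancel] at h this
  linarith

theorem sum_load_sq_reassign_lt {f : ι → γ} {D : Finset ι} {x y : γ} (hD : ∀ j ∈ D, f j = x)
    (hxy : x ≠ y) (hD₀ : 0 < ∑ j ∈ D, p j) (h : load f p y + ∑ j ∈ D, p j < load f p x) :
    ∑ i, load (reassign f D y) p i ^ 2 < ∑ i, load f p i ^ 2 := by
  have := sum_map_load_reassign_sub (p := p) hD hxy (· ^ 2)
  nlinarith

theorem exists_sum_load_rpow_reassign_le {q UB : ℝ} (hq : 1 ≤ q) (hp : ∀ j, 0 ≤ p j)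
    (htot : ∑ j, p j ≤ Fintype.card γ * UB) {σ : ι → β} {b b' : β} (hb' : b' ≠ b)
    {R : Finset ι} (hR : ∀ j ∈ R, σ j = b) (hbig : 2 * UB + ∑ j ∈ R, p j < load σ p b)
    (hsmall : load σ p b' < UB) (τ : β → γ) :
    ∃ τ' : β → γ, ∑ i, load (τ' ∘ reassign σ R b') p i ^ q ≤ ∑ i, load (τ ∘ σ) p i ^ q := by
  set L := load (τ ∘ σ) p
  set B' := univ.filter fun j => σ j = b'
  set m' := ∑ j ∈ B', p j
  have hB' : ∀ j ∈ B', (τ ∘ σ) j = τ b' := fun j hj => by simp [(mem_filter.1 hj).2]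
  set L₀ : γ → ℝ := fun i => L i - if i = τ b' then m' else 0
  obtain ⟨T, -, hT⟩ := exists_min_image univ L₀ ⟨τ b, mem_univ _⟩
  obtain ⟨i, -, hi⟩ := exists_le_of_sum_le (univ_nonempty_iff.2 ⟨τ b⟩) (f := L₀) (g := fun _ => UB)
    (by
      have : 0 ≤ m' := sum_nonneg fun j _ => hp j
      simp [L₀, L, sum_sub_distrib, sum_load]
      linarith)
  -- First move the bag `b'` to `T`, then the part `R` of the bag `b`.
  set f₁ := reassign (τ ∘ σ) B' T
  have hcomp : Function.update τ b' T ∘ reassign σ R b' = reassign f₁ R T := by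
    funext j
    by_cases hjR : j ∈ R <;> by_cases hjb : σ j = b' <;>
      simp [reassign, f₁, B', hjR, hjb, Function.update_of_ne]
  have hf₁ : ∀ j, σ j = b → f₁ j = τ b := fun j hj => by
    simp [f₁, reassign, B', hj, hb'.symm]
  have hf₁T : load f₁ p T = L₀ T + m' := by
    rw [load_reassign hB', if_pos rfl]
  refine ⟨Function.update τ b' T, ?_⟩
  rw [hcomp]
  refine (sum_load_rpow_reassign_le hq hp (fun j hj => hf₁ j (hR j hj)) fun _ => ?_).trans
    (sum_load_rpow_reassign_le hq hp hB' fun hne => ?_)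
  · linarith [load_le_load hp hf₁, hT i (mem_univ _), show m' < UB from hsmall]
  · have := hT (τ b') (mem_univ _)
    simp only [L₀, if_neg hne.symm, if_true, sub_zero] at this
    linarith

end Load

section Feasible

variable {ι β : Type*} [Fintype ι] [DecidableEq ι] [DecidableEq β] {p : ι → ℝ}
  {q UB : ℝ} {S : Finset ℕ} {C : ℕ → ℝ}

def IsFeasible (q : ℝ) (p : ι → ℝ) (S : Finset ℕ) (C : ℕ → ℝ) (σ : ι → β) : Prop :=
  ∀ κ ∈ S, ∃ τ : β → Fin κ, (∑ i, load (τ ∘ σ) p i ^ q) ^ (1 / q) ≤ C κ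

theorem IsFeasible.reassign {σ : ι → β} (hσ : IsFeasible q p S C σ) (hq : 1 ≤ q)
    (hp : ∀ j, 0 ≤ p j) (htot : ∀ κ ∈ S, ∑ j, p j ≤ κ * UB) {b b' : β} (hb' : b' ≠ b)
    {R : Finset ι} (hR : ∀ j ∈ R, σ j = b) (hbig : 2 * UB + ∑ j ∈ R, p j < load σ p b)
    (hsmall : load σ p b' < UB) : IsFeasible q p S C (reassign σ R b') := by
  intro κ hκ
  obtain ⟨τ, hτ⟩ := hσ κ hκ
  obtain ⟨τ', hτ'⟩ := exists_sum_load_rpow_reassign_le hq hp (by simpa using htot κ hκ) hb' hR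
    hbig hsmall τ
  refine ⟨τ', le_trans ?_ hτ⟩
  gcongr
  exact sum_nonneg fun i _ => Real.rpow_nonneg (load_nonneg hp _ i) q

theorem IsFeasible.exists_sum_load_sq_lt [Fintype β] {σ : ι → β} (hσ : IsFeasible q p S C σ)
    (hq : 1 ≤ q) (hUB : 0 ≤ UB) (hp : ∀ j, 0 ≤ p j) (htot : ∀ κ ∈ S, ∑ j, p j ≤ κ * UB)
    (htotβ : ∑ j, p j ≤ Fintype.card β * UB) {b : β} {R : Finset ι} (hR : ∀ j ∈ R, σ j = b)
    (hR₀ : 0 < ∑ j ∈ R, p j) (hbig : 2 * UB + ∑ j ∈ R, p j < load σ p b) :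
    ∃ σ' : ι → β, IsFeasible q p S C σ' ∧ ∑ c, load σ' p c ^ 2 < ∑ c, load σ p c ^ 2 := by
  obtain ⟨b', hb', hsmall⟩ := exists_ne_load_lt htotβ (by linarith : UB < load σ p b)
  exact ⟨_, hσ.reassign hq hp htot hb' hR hbig hsmall,
    sum_load_sq_reassign_lt hR hb'.symm hR₀ (by linarith)⟩

end Feasible

section Stable

variable {ι β : Type*} [Fintype ι] [DecidableEq β] {p : ι → ℝ} {UB : ℝ} {σ : ι → β}

theorem eq_of_two_mul_lt_of_stable (hp : ∀ j, 0 < p j)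
    (hstable : ∀ b R, (∀ j ∈ R, σ j = b) → 0 < ∑ j ∈ R, p j → load σ p b ≤ 2 * UB + ∑ j ∈ R, p j)
    {j j' : ι} (hj : 2 * UB < p j) (hjj' : σ j' = σ j) : j' = j := by
  classical
  by_contra hne
  set R := (univ.filter fun i => σ i = σ j).erase j
  have hR₀ : 0 < ∑ i ∈ R, p i := sum_pos (fun i _ => hp i) ⟨j', by simp [R, hne, hjj']⟩
  have hsplit : p j + ∑ i ∈ R, p i = load σ p (σ j) :=
    add_sum_erase _ p (mem_filter.2 ⟨mem_univ j, rfl⟩)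
  have := hstable (σ j) R (fun i hi => (mem_filter.1 (mem_of_mem_erase hi)).2) hR₀
  linarith

theorem load_le_of_stable (hUB : 0 ≤ UB) (hp : ∀ j, 0 < p j)
    (hstable : ∀ b R, (∀ j ∈ R, σ j = b) → 0 < ∑ j ∈ R, p j → load σ p b ≤ 2 * UB + ∑ j ∈ R, p j)
    {b : β} (hb : ∀ j, σ j = b → p j ≤ 2 * UB) : load σ p b ≤ 4 * UB := by
  classical
  by_contra! hgt
  obtain ⟨j, hj⟩ := nonempty_of_sum_ne_zero (s := univ.filter fun j => σ j = b) (f := p)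
    (by unfold load at hgt; linarith)
  have hjb := (mem_filter.1 hj).2
  have := hstable b {j} (by simpa using hjb) (by simpa using hp j)
  rw [sum_singleton] at this
  linarith [hb j hjb]

end Stable

theorem stmt17_general (pp UB : ℝ) (hpp : 1 < pp) (hUB : 0 < UB)
    (k m : ℕ) (hkm : k ≤ m)
    (n : ℕ) (p : Fin n → ℝ) (hp : ∀ j, 0 < p j)
    (htot : (∑ j, p j) ≤ k * UB)
    (S : Finset ℕ) (hS : ∀ κ ∈ S, k ≤ κ ∧ κ ≤ m)
    (C : ℕ → ℝ)
    (σ₀ : Fin n → Fin m)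
    (hσ₀ : ∀ κ ∈ S, ∃ τ : Fin m → Fin κ,
      (∑ i : Fin κ, (∑ j ∈ Finset.univ.filter (fun j => τ (σ₀ j) = i), p j) ^ pp) ^ (1 / pp)
        ≤ C κ) :
    ∃ σ : Fin n → Fin m,
      (∀ κ ∈ S, ∃ τ : Fin m → Fin κ,
        (∑ i : Fin κ, (∑ j ∈ Finset.univ.filter (fun j => τ (σ j) = i), p j) ^ pp) ^ (1 / pp)
          ≤ C κ) ∧
      (∀ j j', 2 * UB < p j → σ j' = σ j → j' = j) ∧
      (∀ b : Fin m, (∀ j, σ j = b → p j ≤ 2 * UB) →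
        (∑ j ∈ Finset.univ.filter (fun j => σ j = b), p j) ≤ 4 * UB) := by
  classical
  have hp₀ : ∀ j, 0 ≤ p j := fun j => (hp j).le
  have htotS : ∀ κ ∈ S, ∑ j, p j ≤ κ * UB := fun κ hκ =>
    htot.trans (by gcongr; exact (hS κ hκ).1)
  have htotm : ∑ j, p j ≤ Fintype.card (Fin m) * UB := by
    simpa using htot.trans (by gcongr : (k : ℝ) * UB ≤ m * UB)
  obtain ⟨σ, hσ, hmin⟩ := exists_min_image (univ.filter (IsFeasible pp p S C))
    (fun σ => ∑ c, load σ p c ^ 2) ⟨σ₀, mem_filter.2 ⟨mem_univ _, hσ₀⟩⟩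
  replace hσ : IsFeasible pp p S C σ := (mem_filter.1 hσ).2
  have hstable : ∀ b R, (∀ j ∈ R, σ j = b) → 0 < ∑ j ∈ R, p j →
      load σ p b ≤ 2 * UB + ∑ j ∈ R, p j := fun b R hR hR₀ => by
    by_contra! hbig
    obtain ⟨σ', hσ', hlt⟩ := hσ.exists_sum_load_sq_lt hpp.le hUB.le hp₀ htotS htotm hR hR₀ hbig
    exact (hmin σ' (mem_filter.2 ⟨mem_univ _, hσ'⟩)).not_gt hlt
  exact ⟨σ, hσ, fun j j' hj => eq_of_two_mul_lt_of_stable hp hstable hj,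
    fun b => load_le_of_stable hUB.le hp hstable⟩

theorem stmt17 (pp UB : ℝ) (hpp : 1 < pp) (hUB : 0 < UB)
    (k m : ℕ) (hk : 0 < k) (hkm : k ≤ m)
    (n : ℕ) (p : Fin n → ℝ) (hp : ∀ j, 0 < p j)
    (htot : (∑ j, p j) ≤ k * UB)
    (S : Finset ℕ) (hS : ∀ κ ∈ S, k ≤ κ ∧ κ ≤ m)
    (C : ℕ → ℝ) (hC : ∀ κ ∈ S, 0 < C κ)
    (σ₀ : Fin n → Fin m)
    (hσ₀ : ∀ κ ∈ S, ∃ τ : Fin m → Fin κ,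
      (∑ i : Fin κ, (∑ j ∈ Finset.univ.filter (fun j => τ (σ₀ j) = i), p j) ^ pp) ^ (1 / pp)
        ≤ C κ) :
    ∃ σ : Fin n → Fin m,
      (∀ κ ∈ S, ∃ τ : Fin m → Fin κ,
        (∑ i : Fin κ, (∑ j ∈ Finset.univ.filter (fun j => τ (σ j) = i), p j) ^ pp) ^ (1 / pp)
          ≤ C κ) ∧
      (∀ j j', 2 * UB < p j → σ j' = σ j → j' = j) ∧
      (∀ b : Fin m, (∀ j, σ j = b → p j ≤ 2 * UB) →
        (∑ j ∈ Finset.univ.filter (fun j => σ j = b), p j) ≤ 4 * UB) :=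
  stmt17_general pp UB hpp hUB k m hkm n p hp htot S hS C σ₀ hσ₀
end

section
/- Let T > 0 and 0 < ε < 1. Consider a partition of a finite set of jobs with positive sizes into m bags; call a job small if its size is at most ε²·T, and for each bag i let s_i be the total size of the small jobs in bag i. Suppose the small jobs are re-partitioned into groups ('merged jobs'), each group having total size at most 2ε²·T. Then there exists an assignment of the merged jobs to the m bags such that, for every bag i, the total size of the merged jobs assigned to bag i is at most s_i + 2ε²·T. -/
/-!
Assign the merged jobs one at a time. Before each step the total load already placed is at
most the total small size `∑ i, s i`, so some bag `i` still has load at most `s i`; putting the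
next merged job (of size at most `2ε²T`) there keeps that bag within `s i + 2ε²T`.
-/

open Finset

section GreedyAssignment

variable {ι κ : Type*} [DecidableEq ι] [DecidableEq κ]

lemma sum_filter_update_of_notMem {S : Finset ι} {a : ι} (ha : a ∉ S) (A : ι → κ) (i k : κ)
    (q : ι → ℝ) :
    ∑ g ∈ S with Function.update A a k g = i, q g = ∑ g ∈ S with A g = i, q g :=
  sum_congr (filter_congr fun g hg => by rw [Function.update_of_ne (ne_of_mem_of_not_mem hg ha)])
    fun _ _ => rfl

theorem exists_assignment_sum_le_add [Fintype κ] [Nonempty κ] {q : ι → ℝ} {s : κ → ℝ} {B : ℝ}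
    (hB : 0 ≤ B) (hs : ∀ i, 0 ≤ s i) (S : Finset ι) (hq : ∀ g ∈ S, 0 ≤ q g)
    (hqB : ∀ g ∈ S, q g ≤ B) (hS : ∑ g ∈ S, q g ≤ ∑ i, s i) :
    ∃ A : ι → κ, ∀ i, ∑ g ∈ S with A g = i, q g ≤ s i + B := by
  induction S using Finset.induction_on with
  | empty => exact ⟨fun _ => Classical.arbitrary κ, fun i => by simpa using add_nonneg (hs i) hB⟩
  | @insert a S ha ih =>
    rw [sum_insert ha] at hS
    obtain ⟨A, hA⟩ := ih (fun g hg => hq g (mem_insert_of_mem hg))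
      (fun g hg => hqB g (mem_insert_of_mem hg)) (by linarith [hq a (mem_insert_self a S)])
    have hload : ∑ i, ∑ g ∈ S with A g = i, q g ≤ ∑ i, s i := by
      rw [sum_fiberwise]; linarith [hq a (mem_insert_self a S)]
    obtain ⟨k, -, hk⟩ := exists_le_of_sum_le univ_nonempty hload
    refine ⟨Function.update A a k, fun i => ?_⟩
    rw [filter_insert]
    by_cases hi : i = k
    · subst hi
      rw [if_pos (Function.update_self a i A), sum_insert (by simp [ha]),
        sum_filter_update_of_notMem ha]
      linarith [hqB a (mem_insert_self a S)]
    · rw [if_neg (by simpa using Ne.symm hi), sum_filter_update_of_notMem ha]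
      exact hA i

end GreedyAssignment

lemma sum_sum_filter_and_eq {ι κ : Type*} [Fintype ι] [Fintype κ] [DecidableEq κ]
    (P : ι → Prop) [DecidablePred P] (f : ι → κ) (w : ι → ℝ) :
    ∑ k, ∑ j with P j ∧ f j = k, w j = ∑ j with P j, w j := by
  simp_rw [← filter_filter, sum_fiberwise]

theorem stmt19_general (T ε : ℝ) (hT : 0 < T)
    (n m L : ℕ) (hm : 0 < m)
    (p : Fin n → ℝ) (hp : ∀ j, 0 < p j)
    (σ : Fin n → Fin m) (G : Fin n → Fin L)
    (hgrp : ∀ g : Fin L,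
      (∑ j ∈ Finset.univ.filter (fun j => p j ≤ ε ^ 2 * T ∧ G j = g), p j)
        ≤ 2 * ε ^ 2 * T) :
    ∃ A : Fin L → Fin m, ∀ i : Fin m,
      (∑ g ∈ Finset.univ.filter (fun g => A g = i),
          ∑ j ∈ Finset.univ.filter (fun j => p j ≤ ε ^ 2 * T ∧ G j = g), p j)
        ≤ (∑ j ∈ Finset.univ.filter (fun j => σ j = i ∧ p j ≤ ε ^ 2 * T), p j)
            + 2 * ε ^ 2 * T := by
  have : Nonempty (Fin m) := ⟨⟨0, hm⟩⟩
  have hmerged_eq_small : ∑ g, ∑ j with p j ≤ ε ^ 2 * T ∧ G j = g, p j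
      = ∑ i, ∑ j with σ j = i ∧ p j ≤ ε ^ 2 * T, p j := by
    simp_rw [sum_sum_filter_and_eq, and_comm (a := σ _ = _), sum_sum_filter_and_eq]
  exact exists_assignment_sum_le_add (by positivity)
    (fun i => sum_nonneg fun j _ => (hp j).le) univ
    (fun g _ => sum_nonneg fun j _ => (hp j).le) (fun g _ => hgrp g) hmerged_eq_small.le

theorem stmt19 (T ε : ℝ) (hT : 0 < T) (hε : 0 < ε) (hε1 : ε < 1)
    (n m L : ℕ) (hm : 0 < m)
    (p : Fin n → ℝ) (hp : ∀ j, 0 < p j)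
    (σ : Fin n → Fin m) (G : Fin n → Fin L)
    (hgrp : ∀ g : Fin L,
      (∑ j ∈ Finset.univ.filter (fun j => p j ≤ ε ^ 2 * T ∧ G j = g), p j)
        ≤ 2 * ε ^ 2 * T) :
    ∃ A : Fin L → Fin m, ∀ i : Fin m,
      (∑ g ∈ Finset.univ.filter (fun g => A g = i),
          ∑ j ∈ Finset.univ.filter (fun j => p j ≤ ε ^ 2 * T ∧ G j = g), p j)
        ≤ (∑ j ∈ Finset.univ.filter (fun j => σ j = i ∧ p j ≤ ε ^ 2 * T), p j)
            + 2 * ε ^ 2 * T :=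
  stmt19_general T ε hT n m L hm p hp σ G hgrp
end
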